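/- arXiv:1904.07425 — 7 statements merged into one kernel-verified Lean document; each statement's English description precedes it below -/
import Mathlib

section
/- The trace operator on partial measurable functions is well-defined: for any partial measurable function f : X + Z → Y + Z, the partial function tr(f) : X → Y, defined by tr(f)(x) = y iff either f(inl x) = inl y, or there exists a finite sequence z₁,…,zₙ ∈ Z with f(inl x) = inr z₁, f(inr zᵢ) = inr z_{i+1} for all i < n, and f(inr zₙ) = inl y, is a partial measurable function from X to Y. -/
/-- A partial function `f : X →. Y` is partial measurable when, for every measurable
set `A ⊆ Y`, the set of points where `f` is defined with value in `A` is measurable. -/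
def PartialMeasurable {X Y : Type*} [MeasurableSpace X] [MeasurableSpace Y]
    (f : X →. Y) : Prop :=
  ∀ A : Set Y, MeasurableSet A → MeasurableSet {x | ∃ y ∈ f x, y ∈ A}

/-- The trace relation of `f : X + Z →. Y + Z`: `TraceRel f x y` holds iff
`f (inl x) = inl y`, or there is a finite sequence `z₀, …, zₙ` in `Z` with
`f (inl x) = inr z₀`, `f (inr zᵢ) = inr zᵢ₊₁` for all `i < n`, and
`f (inr zₙ) = inl y`. -/
def TraceRel {X Y Z : Type*} (f : (X ⊕ Z) →. (Y ⊕ Z)) (x : X) (y : Y) : Prop :=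
  Sum.inl y ∈ f (Sum.inl x) ∨
    ∃ (n : ℕ) (z : Fin (n + 1) → Z),
      Sum.inr (z 0) ∈ f (Sum.inl x) ∧
      (∀ i : Fin n, Sum.inr (z i.succ) ∈ f (Sum.inr (z i.castSucc))) ∧
      Sum.inl y ∈ f (Sum.inr (z (Fin.last n)))

/-- `t` is a trace of `f` when the graph of `t` is exactly the trace relation of `f`. -/
def IsTrace {X Y Z : Type*} (f : (X ⊕ Z) →. (Y ⊕ Z)) (t : X →. Y) : Prop :=
  ∀ x y, y ∈ t x ↔ TraceRel f x y

/-!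
The trace is `x ↦ f (inl x)` followed by `Sum.elim id (PFun.fix (f ∘ inr))`, where `PFun.fix g`
iterates `g` until it exits through the left summand; the finite sequences in `TraceRel` are
exactly the runs of this iteration, and uniqueness of the trace comes for free from `Part`.
Partial measurability is stable under composition, case split on a sum, and `PFun.fix`: the
points whose run exits into `A` after exactly `n` internal steps form a measurable set by
induction on `n`, and the preimage of `A` under the fixpoint is their countable union.
-/

namespace PFun

variable {α β : Type*}

theorem mem_fix_of_chain {f : α →. β ⊕ α} {b : β} :
    ∀ {n : ℕ} (z : Fin (n + 1) → α), (∀ i : Fin n, Sum.inr (z i.succ) ∈ f (z i.castSucc)) →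
      Sum.inl b ∈ f (z (Fin.last n)) → b ∈ f.fix (z 0)
  | 0, _, _, hexit => fix_stop hexit
  | n + 1, z, hstep, hexit => by
    have hfirst : Sum.inr (z 1) ∈ f (z 0) := hstep 0
    have htail : b ∈ f.fix (Fin.tail z 0) :=
      mem_fix_of_chain (Fin.tail z)
        (fun i => by simpa only [Fin.tail, Fin.succ_castSucc] using hstep i.succ)
        (by simpa only [Fin.tail, Fin.succ_last] using hexit)
    exact mem_fix_iff.2 (Or.inr ⟨_, hfirst, htail⟩)

theorem exists_chain_of_mem_fix {f : α →. β ⊕ α} {a : α} {b : β} (h : b ∈ f.fix a) :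
    ∃ (n : ℕ) (z : Fin (n + 1) → α), z 0 = a ∧
      (∀ i : Fin n, Sum.inr (z i.succ) ∈ f (z i.castSucc)) ∧ Sum.inl b ∈ f (z (Fin.last n)) := by
  refine fixInduction' h (fun a hexit => ⟨0, fun _ => a, rfl, Fin.elim0, hexit⟩) ?_
  rintro a₀ a₁ - hfirst ⟨n, z, rfl, hstep, hexit⟩
  refine ⟨n + 1, Fin.cons a₀ z, rfl, fun i => ?_, ?_⟩
  · cases i using Fin.cases with
    | zero => exact hfirst
    | succ i => simpa only [Fin.cons_succ, ← Fin.succ_castSucc] using hstep i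
  · simpa only [← Fin.succ_last, Fin.cons_succ] using hexit

theorem mem_fix_iff_exists_chain {f : α →. β ⊕ α} {a : α} {b : β} :
    b ∈ f.fix a ↔ ∃ (n : ℕ) (z : Fin (n + 1) → α), z 0 = a ∧
      (∀ i : Fin n, Sum.inr (z i.succ) ∈ f (z i.castSucc)) ∧ Sum.inl b ∈ f (z (Fin.last n)) :=
  ⟨exists_chain_of_mem_fix, fun ⟨_, z, hz, hstep, hexit⟩ => hz ▸ mem_fix_of_chain z hstep hexit⟩

/-- The points from which iterating `f` leaves `α` after exactly `n` steps inside `α`,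
landing in `s`. -/
def exitAfter (f : α →. β ⊕ α) (s : Set β) : ℕ → Set α
  | 0 => f.preimage (Sum.inl '' s)
  | n + 1 => f.preimage (Sum.inr '' exitAfter f s n)

theorem preimage_fix_eq_iUnion_exitAfter (f : α →. β ⊕ α) (s : Set β) :
    f.fix.preimage s = ⋃ n, f.exitAfter s n := by
  ext a
  simp only [mem_preimage, Set.mem_iUnion]
  constructor
  · rintro ⟨b, hb, hfix⟩
    refine fixInduction' hfix (fun a hexit => ⟨0, _, ⟨b, hb, rfl⟩, hexit⟩) ?_
    rintro a₀ a₁ - hfirst ⟨n, ha₁⟩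
    exact ⟨n + 1, _, ⟨a₁, ha₁, rfl⟩, hfirst⟩
  · rintro ⟨n, ha⟩
    induction n generalizing a with
    | zero =>
      obtain ⟨-, ⟨b, hb, rfl⟩, hexit⟩ := ha
      exact ⟨b, hb, fix_stop hexit⟩
    | succ n ih =>
      obtain ⟨-, ⟨a₁, ha₁, rfl⟩, hfirst⟩ := ha
      obtain ⟨b, hb, hfix⟩ := ih a₁ ha₁
      exact ⟨b, hb, mem_fix_iff.2 (Or.inr ⟨a₁, hfirst, hfix⟩)⟩

end PFun

section PartialMeasurable

variable {α β γ : Type*} [MeasurableSpace α] [MeasurableSpace β] [MeasurableSpace γ]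

theorem partialMeasurable_iff_preimage {f : α →. β} :
    PartialMeasurable f ↔ ∀ s : Set β, MeasurableSet s → MeasurableSet (f.preimage s) := by
  simp only [PartialMeasurable, PFun.Preimage_def, and_comm]

theorem PartialMeasurable.measurableSet_preimage {f : α →. β} (hf : PartialMeasurable f)
    {s : Set β} (hs : MeasurableSet s) : MeasurableSet (f.preimage s) :=
  partialMeasurable_iff_preimage.1 hf s hs

theorem PartialMeasurable.id : PartialMeasurable (PFun.id α) :=
  partialMeasurable_iff_preimage.2 fun s hs => by simpa [PFun.Preimage_def] using hs

theorem PartialMeasurable.comp {g : β →. γ} {f : α →. β} (hg : PartialMeasurable g)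
    (hf : PartialMeasurable f) : PartialMeasurable (g.comp f) :=
  partialMeasurable_iff_preimage.2 fun _ hs => by
    rw [PFun.preimage_comp]
    exact hf.measurableSet_preimage (hg.measurableSet_preimage hs)

theorem PartialMeasurable.comp_measurable {f : β →. γ} {g : α → β} (hf : PartialMeasurable f)
    (hg : Measurable g) : PartialMeasurable fun a => f (g a) :=
  fun _ hs => hg (hf _ hs)

theorem PartialMeasurable.sumElim {f : α →. γ} {g : β →. γ} (hf : PartialMeasurable f)
    (hg : PartialMeasurable g) : PartialMeasurable (Sum.elim f g) :=
  fun _ hs => measurableSet_sum_iff.2 ⟨hf _ hs, hg _ hs⟩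

theorem PartialMeasurable.fix {f : α →. β ⊕ α} (hf : PartialMeasurable f) :
    PartialMeasurable f.fix := by
  refine partialMeasurable_iff_preimage.2 fun s hs => ?_
  have hexit : ∀ n, MeasurableSet (f.exitAfter s n) := by
    intro n
    induction n with
    | zero => exact hf.measurableSet_preimage hs.inl_image
    | succ n ih => exact hf.measurableSet_preimage ih.inr_image
  rw [PFun.preimage_fix_eq_iUnion_exitAfter]
  exact .iUnion hexit

end PartialMeasurable

def trace {X Y Z : Type*} (f : (X ⊕ Z) →. (Y ⊕ Z)) : X →. Y :=
  fun x => (f (Sum.inl x)).bind (Sum.elim Part.some (PFun.fix fun z => f (Sum.inr z)))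

theorem isTrace_trace {X Y Z : Type*} (f : (X ⊕ Z) →. (Y ⊕ Z)) : IsTrace f (trace f) := by
  intro x y
  rw [trace, Part.mem_bind_iff, TraceRel]
  constructor
  · rintro ⟨(y' | z), hfirst, hy⟩
    · exact Or.inl (Part.mem_some_iff.1 hy ▸ hfirst)
    · obtain ⟨n, w, rfl, hstep, hexit⟩ := PFun.mem_fix_iff_exists_chain.1 hy
      exact Or.inr ⟨n, w, hfirst, hstep, hexit⟩
  · rintro (hexit | ⟨n, w, hfirst, hstep, hexit⟩)
    · exact ⟨_, hexit, Part.mem_some y⟩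
    · exact ⟨_, hfirst, PFun.mem_fix_iff_exists_chain.2 ⟨n, w, rfl, hstep, hexit⟩⟩

/-- The trace of a partial measurable function exists as a partial function and is
partial measurable. -/
theorem partialMeasurable_trace
    {X Y Z : Type*} [MeasurableSpace X] [MeasurableSpace Y] [MeasurableSpace Z]
    (f : (X ⊕ Z) →. (Y ⊕ Z)) (hf : PartialMeasurable f) :
    ∃ t : X →. Y, IsTrace f t ∧ PartialMeasurable t :=
  ⟨trace f, isTrace_trace f,
    (PartialMeasurable.id.sumElim (hf.comp_measurable measurable_inr).fix).comp
      (hf.comp_measurable measurable_inl)⟩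
end

section
/- The trace operator on partial measurable functions satisfies yanking: for any measurable space X, the trace of the symmetry map σ : X + X → X + X (which swaps the two summands, σ(inl x) = inr x and σ(inr x) = inl x) equals the identity function on X. -/
/-- The symmetry map on `X + X`, swapping the two summands. -/
def sumSwap {X : Type*} : (X ⊕ X) →. (X ⊕ X) := fun s =>
  Part.some (Sum.elim Sum.inr Sum.inl s)

namespace sumSwap

variable {X : Type*}

@[simp]
theorem apply_inl (x : X) : sumSwap (Sum.inl x) = Part.some (Sum.inr x) := rfl

@[simp]
theorem apply_inr (x : X) : sumSwap (Sum.inr x) = Part.some (Sum.inl x) := rfl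

/-- `sumSwap` never maps `inr` into `inr`, so every trace path has length zero, with `z₀ = x`. -/
theorem traceRel_iff (x y : X) : TraceRel sumSwap x y ↔ y = x := by
  constructor
  · rintro (h_direct | ⟨n, z, h_first, h_step, h_last⟩)
    · simp at h_direct
    · cases n with
      | zero =>
        simp only [apply_inl, apply_inr, Part.mem_some_iff, Sum.inr.injEq, Sum.inl.injEq]
          at h_first h_last
        rw [h_last, ← h_first]
        rfl
      | succ n => simpa using h_step 0
  · rintro rfl
    exact Or.inr ⟨0, fun _ => y, by simp, Fin.elim0, by simp⟩

theorem isTrace_iff (t : X →. X) : IsTrace sumSwap t ↔ t = PFun.id X := by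
  have traceRel_iff_mem_id : ∀ x y, TraceRel sumSwap x y ↔ y ∈ PFun.id X x := by
    simp [traceRel_iff]
  simp only [IsTrace, traceRel_iff_mem_id]
  exact ⟨PFun.ext, by rintro rfl _ _; rfl⟩

end sumSwap

theorem trace_yanking_general {X : Type*} :
    (∃ t : X →. X, IsTrace (sumSwap (X := X)) t) ∧
    ∀ t : X →. X, IsTrace (sumSwap (X := X)) t → ∀ x, t x = Part.some x :=
  ⟨⟨PFun.id X, (sumSwap.isTrace_iff _).2 rfl⟩,
    fun t ht x => by rw [(sumSwap.isTrace_iff t).1 ht, PFun.id_apply]⟩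

/-- Yanking: the trace of the symmetry map `σ : X + X → X + X` is the identity on `X`. -/
theorem trace_yanking {X : Type*} [MeasurableSpace X] :
    (∃ t : X →. X, IsTrace (sumSwap (X := X)) t) ∧
    ∀ t : X →. X, IsTrace (sumSwap (X := X)) t → ∀ x, t x = Part.some x :=
  trace_yanking_general
end

section
/- The trace operator on partial measurable functions is uniform: for all partial measurable functions f : X + Z → Y + Z, g : X + W → Y + W, and a total measurable function h : Z → W, if g ∘ (id_X + h) = (id_Y + h) ∘ f (as partial functions X + Z → Y + W), then tr(f) = tr(g) as partial functions X → Y. -/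
private theorem trace_aux_back {X Y Z W : Type*}
    (f : (X ⊕ Z) →. (Y ⊕ Z)) (g : (X ⊕ W) →. (Y ⊕ W)) (h : Z → W)
    (hcomm : ∀ s : X ⊕ Z, g (Sum.map id h s) = (f s).map (Sum.map id h))
    (y : Y) :
    ∀ (n : ℕ) (w : Fin (n + 1) → W) (z0 : Z), h z0 = w 0 →
      (∀ i : Fin n, Sum.inr (w i.succ) ∈ g (Sum.inr (w i.castSucc))) →
      Sum.inl y ∈ g (Sum.inr (w (Fin.last n))) →
      ∃ z : Fin (n + 1) → Z, z 0 = z0 ∧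
        (∀ i : Fin n, Sum.inr (z i.succ) ∈ f (Sum.inr (z i.castSucc))) ∧
        Sum.inl y ∈ f (Sum.inr (z (Fin.last n))) := by
  intro n
  induction n with
  | zero =>
    intro w z0 h0 _ hlast
    refine ⟨fun _ => z0, rfl, fun i => i.elim0, ?_⟩
    have hm : Sum.inl y ∈ g (Sum.map id h (Sum.inr z0)) := by
      simpa [Sum.map, h0] using hlast
    rw [hcomm] at hm
    obtain ⟨a, ha, hae⟩ := (Part.mem_map_iff _).mp hm
    cases a with
    | inl y' => cases hae; exact ha
    | inr z' => simp [Sum.map] at hae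
  | succ n ih =>
    intro w z0 h0 hsteps hlast
    have step0 : Sum.inr (w (Fin.succ 0)) ∈ g (Sum.map id h (Sum.inr z0)) := by
      have := hsteps 0
      simpa [Sum.map, h0, Fin.castSucc_zero] using this
    rw [hcomm] at step0
    obtain ⟨a, ha, hae⟩ := (Part.mem_map_iff _).mp step0
    obtain ⟨z1, rfl⟩ : ∃ z1, a = Sum.inr z1 := by
      cases a with
      | inl y' => simp [Sum.map] at hae
      | inr z' => exact ⟨z', rfl⟩
    have hz1 : h z1 = w (Fin.succ 0) := by simpa [Sum.map] using hae
    obtain ⟨z', hz'0, hz'steps, hz'last⟩ :=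
      ih (fun i => w i.succ) z1 hz1
        (fun i => by
          have e : i.castSucc.succ = i.succ.castSucc := Fin.ext (by simp)
          simpa only [e] using hsteps i.succ)
        (by simpa [Fin.succ_last] using hlast)
    refine ⟨Fin.cons z0 z', by simp, ?_, ?_⟩
    · intro i
      induction i using Fin.cases with
      | zero =>
        simpa [Fin.castSucc_zero, Fin.cons_succ, Fin.cons_zero, hz'0] using ha
      | succ j =>
        have e : j.succ.castSucc = j.castSucc.succ := Fin.ext (by simp)
        simpa only [e, Fin.cons_succ] using hz'steps j
    · simpa [Fin.succ_last, Fin.cons_succ] using hz'last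

/-- Uniformity of the trace operator: if `g ∘ (id + h) = (id + h) ∘ f` for a total
measurable `h : Z → W`, then the traces of `f` and `g` coincide. -/
theorem trace_uniform
    {X Y Z W : Type*} [MeasurableSpace X] [MeasurableSpace Y]
    [MeasurableSpace Z] [MeasurableSpace W]
    (f : (X ⊕ Z) →. (Y ⊕ Z)) (g : (X ⊕ W) →. (Y ⊕ W)) (h : Z → W)
    (hf : PartialMeasurable f) (hg : PartialMeasurable g) (hh : Measurable h)
    (hcomm : ∀ s : X ⊕ Z, g (Sum.map id h s) = (f s).map (Sum.map id h))
    (tf tg : X →. Y) (htf : IsTrace f tf) (htg : IsTrace g tg) :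
    tf = tg := by
  have key : ∀ (s : X ⊕ Z) (b : Y ⊕ W),
      b ∈ g (Sum.map id h s) ↔ ∃ a ∈ f s, Sum.map id h a = b := by
    intro s b
    rw [hcomm]
    exact Part.mem_map_iff _
  funext x
  apply Part.ext
  intro y
  rw [htf x y, htg x y]
  constructor
  · rintro (hy | ⟨n, z, h0, hsteps, hlast⟩)
    · left
      have : Sum.inl y ∈ g (Sum.map id h (Sum.inl x)) :=
        (key _ _).mpr ⟨Sum.inl y, hy, rfl⟩
      simpa [Sum.map] using this
    · right
      refine ⟨n, fun i => h (z i), ?_, ?_, ?_⟩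
      · have : Sum.inr (h (z 0)) ∈ g (Sum.map id h (Sum.inl x)) :=
          (key _ _).mpr ⟨Sum.inr (z 0), h0, rfl⟩
        simpa [Sum.map] using this
      · intro i
        have : Sum.inr (h (z i.succ)) ∈ g (Sum.map id h (Sum.inr (z i.castSucc))) :=
          (key _ _).mpr ⟨Sum.inr (z i.succ), hsteps i, rfl⟩
        simpa [Sum.map] using this
      · have : Sum.inl y ∈ g (Sum.map id h (Sum.inr (z (Fin.last n)))) :=
          (key _ _).mpr ⟨Sum.inl y, hlast, rfl⟩
        simpa [Sum.map] using this
  · rintro (hy | ⟨n, w, h0, hsteps, hlast⟩)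
    · left
      have hm : Sum.inl y ∈ g (Sum.map id h (Sum.inl x)) := by
        simpa [Sum.map] using hy
      obtain ⟨a, ha, hae⟩ := (key _ _).mp hm
      cases a with
      | inl y' => cases hae; exact ha
      | inr z' => simp [Sum.map] at hae
    · right
      have hm : Sum.inr (w 0) ∈ g (Sum.map id h (Sum.inl x)) := by
        simpa [Sum.map] using h0
      obtain ⟨a, ha, hae⟩ := (key _ _).mp hm
      obtain ⟨z0, rfl⟩ : ∃ z0, a = Sum.inr z0 := by
        cases a with
        | inl y' => simp [Sum.map] at hae
        | inr z' => exact ⟨z', rfl⟩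
      have hz0 : h z0 = w 0 := by simpa [Sum.map] using hae
      obtain ⟨z, hz0', hzsteps, hzlast⟩ :=
        trace_aux_back f g h hcomm y n w z0 hz0 hsteps hlast
      exact ⟨n, z, hz0' ▸ ha, hzsteps, hzlast⟩
end

section
/- The trace operator on partial measurable functions satisfies dinaturality: for partial measurable functions f : X + Z → Y + Z, g : X' → X, and h : Y → Y', one has h ∘ tr(f) ∘ g = tr((h + id_Z) ∘ f ∘ (g + id_Z)). -/
/-- The coproduct of two partial functions. -/
def pfunSumMap {X Y Z W : Type*} (f : X →. Y) (g : Z →. W) :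
    (X ⊕ Z) →. (Y ⊕ W) := fun s =>
  Sum.elim (fun x => (f x).map Sum.inl) (fun z => (g z).map Sum.inr) s

private lemma mem_bind_pfun {α β : Type*} {f : Part α} {g : α →. β} {b : β} :
    b ∈ f.bind g ↔ ∃ a ∈ f, b ∈ g a := Part.mem_bind_iff

section aux
variable {X X' Y Y' Z : Type*} (f : (X ⊕ Z) →. (Y ⊕ Z)) (g : X' →. X) (h : Y →. Y')

private def FF : (X' ⊕ Z) →. (Y' ⊕ Z) :=
  (pfunSumMap h (PFun.id Z)).comp (f.comp (pfunSumMap g (PFun.id Z)))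

private lemma mem_FF_inl {x' : X'} {w : Y' ⊕ Z} :
    w ∈ FF f g h (Sum.inl x') ↔
      ∃ x ∈ g x',
        ((∃ y0, Sum.inl y0 ∈ f (Sum.inl x) ∧ ∃ y ∈ h y0, w = Sum.inl y) ∨
         (∃ z, Sum.inr z ∈ f (Sum.inl x) ∧ w = Sum.inr z)) := by
  simp only [FF, PFun.comp_apply, Part.bind_eq_bind, Part.mem_bind_iff, mem_bind_pfun, pfunSumMap,
    Sum.elim_inl, Sum.elim_inr, Part.mem_map_iff, PFun.id]
  constructor
  · rintro ⟨b, ⟨a, ⟨x, hx, rfl⟩, hb⟩, hw⟩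
    refine ⟨x, hx, ?_⟩
    rcases b with y0 | z
    · simp only [Sum.elim_inl, Part.mem_map_iff] at hw
      obtain ⟨y, hy, rfl⟩ := hw
      exact Or.inl ⟨y0, hb, y, hy, rfl⟩
    · simp only [Sum.elim_inr, Part.mem_map_iff, Part.mem_some_iff] at hw
      obtain ⟨z', rfl, rfl⟩ := hw
      exact Or.inr ⟨_, hb, rfl⟩
  · rintro ⟨x, hx, ⟨y0, hy0, y, hy, rfl⟩ | ⟨z, hz, rfl⟩⟩
    · exact ⟨Sum.inl y0, ⟨Sum.inl x, ⟨x, hx, rfl⟩, hy0⟩, Part.mem_map _ hy⟩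
    · exact ⟨Sum.inr z, ⟨Sum.inl x, ⟨x, hx, rfl⟩, hz⟩, Part.mem_map _ (Part.mem_some _)⟩

private lemma mem_FF_inr {z : Z} {w : Y' ⊕ Z} :
    w ∈ FF f g h (Sum.inr z) ↔
      ((∃ y0, Sum.inl y0 ∈ f (Sum.inr z) ∧ ∃ y ∈ h y0, w = Sum.inl y) ∨
       (∃ z', Sum.inr z' ∈ f (Sum.inr z) ∧ w = Sum.inr z')) := by
  simp only [FF, PFun.comp_apply, Part.bind_eq_bind, Part.mem_bind_iff, mem_bind_pfun, pfunSumMap,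
    Sum.elim_inl, Sum.elim_inr, Part.mem_map_iff, Part.mem_some_iff, PFun.id]
  constructor
  · rintro ⟨b, ⟨a, ⟨z1, rfl, rfl⟩, hb⟩, hw⟩
    rcases b with y0 | z'
    · simp only [Sum.elim_inl, Part.mem_map_iff] at hw
      obtain ⟨y, hy, rfl⟩ := hw
      exact Or.inl ⟨y0, hb, y, hy, rfl⟩
    · simp only [Sum.elim_inr, Part.mem_map_iff, Part.mem_some_iff] at hw
      obtain ⟨z'', rfl, rfl⟩ := hw
      exact Or.inr ⟨_, hb, rfl⟩
  · rintro (⟨y0, hy0, y, hy, rfl⟩ | ⟨z', hz, rfl⟩)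
    · exact ⟨Sum.inl y0, ⟨Sum.inr z, ⟨z, rfl, rfl⟩, hy0⟩, Part.mem_map _ hy⟩
    · exact ⟨Sum.inr z', ⟨Sum.inr z, ⟨z, rfl, rfl⟩, hz⟩, Part.mem_map _ (Part.mem_some _)⟩

end aux

/-- Dinaturality of the trace operator:
`h ∘ tr(f) ∘ g = tr((h + id_Z) ∘ f ∘ (g + id_Z))` for partial measurable
`f : X + Z →. Y + Z`, `g : X' →. X` and `h : Y →. Y'`. -/
theorem trace_dinatural
    {X X' Y Y' Z : Type*} [MeasurableSpace X] [MeasurableSpace X']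
    [MeasurableSpace Y] [MeasurableSpace Y'] [MeasurableSpace Z]
    (f : (X ⊕ Z) →. (Y ⊕ Z)) (g : X' →. X) (h : Y →. Y')
    (hf : PartialMeasurable f) (hg : PartialMeasurable g) (hh : PartialMeasurable h)
    (tf : X →. Y) (tF : X' →. Y')
    (htf : IsTrace f tf)
    (htF : IsTrace
      ((pfunSumMap h (PFun.id Z)).comp (f.comp (pfunSumMap g (PFun.id Z)))) tF) :
    h.comp (tf.comp g) = tF := by
  have htF' : IsTrace (FF f g h) tF := htF
  apply PFun.ext
  intro x' y
  rw [htF' x' y]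
  simp only [PFun.comp_apply, Part.bind_eq_bind, Part.mem_bind_iff, mem_bind_pfun]
  constructor
  · rintro ⟨y0, ⟨x, hx, hy0⟩, hy⟩
    rcases (htf x y0).1 hy0 with hl | ⟨n, z, h1, h2, h3⟩
    · exact Or.inl ((mem_FF_inl f g h).2 ⟨x, hx, Or.inl ⟨y0, hl, y, hy, rfl⟩⟩)
    · refine Or.inr ⟨n, z, ?_, fun i => ?_, ?_⟩
      · exact (mem_FF_inl f g h).2 ⟨x, hx, Or.inr ⟨z 0, h1, rfl⟩⟩
      · exact (mem_FF_inr f g h).2 (Or.inr ⟨z i.succ, h2 i, rfl⟩)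
      · exact (mem_FF_inr f g h).2 (Or.inl ⟨y0, h3, y, hy, rfl⟩)
  · rintro (hl | ⟨n, z, h1, h2, h3⟩)
    · rcases (mem_FF_inl f g h).1 hl with ⟨x, hx, ⟨y0, hy0, y', hy', hyy⟩ | ⟨z, _, hzz⟩⟩
      · cases hyy
        exact ⟨y0, ⟨x, hx, (htf x y0).2 (Or.inl hy0)⟩, hy'⟩
      · cases hzz
    · rcases (mem_FF_inl f g h).1 h1 with ⟨x, hx, ⟨_, _, _, _, hc⟩ | ⟨z0, hz0, hc⟩⟩
      · cases hc
      · have hz0' : Sum.inr (z 0) ∈ f (Sum.inl x) := by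
          cases hc; exact hz0
        have h2' : ∀ i : Fin n, Sum.inr (z i.succ) ∈ f (Sum.inr (z i.castSucc)) := by
          intro i
          rcases (mem_FF_inr f g h).1 (h2 i) with ⟨_, _, _, _, hc⟩ | ⟨z', hz', hc⟩
          · cases hc
          · cases hc; exact hz'
        rcases (mem_FF_inr f g h).1 h3 with ⟨y0, hy0, y', hy', hc⟩ | ⟨_, _, hc⟩
        · cases hc
          exact ⟨y0, ⟨x, hx, (htf x y0).2 (Or.inr ⟨n, z, hz0', h2', hy0⟩)⟩, hy'⟩
        · cases hc
end

section
/- The trace operator on partial measurable functions distributes over products: for any partial measurable function f : X + Z → Y + Z and measurable space W, the function id_W × tr(f) : W × X → W × Y equals the trace over W × Z of the map dst⁻¹ ∘ (id_W × f) ∘ dst : (W × X) + (W × Z) → (W × Y) + (W × Z), where dst : (W × X) + (W × Z) → W × (X + Z) is the canonical distributivity isomorphism. -/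
/-- Inverse of the canonical distributivity map `(W × X) + (W × Z) ≅ W × (X + Z)`. -/
def dstInv {W X Z : Type*} : W × (X ⊕ Z) → (W × X) ⊕ (W × Z) := fun p =>
  match p.2 with
  | Sum.inl x => Sum.inl (p.1, x)
  | Sum.inr z => Sum.inr (p.1, z)

/-- The map `dst⁻¹ ∘ (id_W × f) ∘ dst : (W × X) + (W × Z) →. (W × Y) + (W × Z)`. -/
def prodTraced {W X Y Z : Type*} (f : (X ⊕ Z) →. (Y ⊕ Z)) :
    ((W × X) ⊕ (W × Z)) →. ((W × Y) ⊕ (W × Z)) := fun s =>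
  match s with
  | Sum.inl (w, x) => (f (Sum.inl x)).map fun v => dstInv (w, v)
  | Sum.inr (w, z) => (f (Sum.inr z)).map fun v => dstInv (w, v)

/-! `prodTraced f` never changes the `W`-coordinate, so a trace path of it from `(w, x)` is
exactly a trace path of `f` from `x` with `w` carried along. -/

section

variable {W X Y Z : Type*} {f : (X ⊕ Z) →. (Y ⊕ Z)}

theorem inl_mem_prodTraced_inl {w w' : W} {x : X} {y : Y} :
    Sum.inl (w', y) ∈ prodTraced f (Sum.inl (w, x)) ↔
      w' = w ∧ Sum.inl y ∈ f (Sum.inl x) := by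
  simp [prodTraced, dstInv, and_comm, eq_comm]

theorem inr_mem_prodTraced_inl {w : W} {x : X} {p : W × Z} :
    Sum.inr p ∈ prodTraced f (Sum.inl (w, x)) ↔ p.1 = w ∧ Sum.inr p.2 ∈ f (Sum.inl x) := by
  simp [prodTraced, dstInv, and_comm, eq_comm, Prod.ext_iff]

theorem inr_mem_prodTraced_inr {p q : W × Z} :
    Sum.inr q ∈ prodTraced (X := X) f (Sum.inr p) ↔
      q.1 = p.1 ∧ Sum.inr q.2 ∈ f (Sum.inr p.2) := by
  simp [prodTraced, dstInv, and_comm, eq_comm, Prod.ext_iff]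

theorem inl_mem_prodTraced_inr {p : W × Z} {w : W} {y : Y} :
    Sum.inl (w, y) ∈ prodTraced (X := X) f (Sum.inr p) ↔
      w = p.1 ∧ Sum.inl y ∈ f (Sum.inr p.2) := by
  simp [prodTraced, dstInv, and_comm, eq_comm]

theorem traceRel_prodTraced_iff {w w' : W} {x : X} {y : Y} :
    TraceRel (prodTraced (W := W) f) (w, x) (w', y) ↔ w' = w ∧ TraceRel f x y := by
  constructor
  · rintro (h | ⟨n, z, h0, hchain, hlast⟩)
    · exact (inl_mem_prodTraced_inl.1 h).imp_right Or.inl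
    · simp only [inr_mem_prodTraced_inl, inr_mem_prodTraced_inr, inl_mem_prodTraced_inr]
        at h0 hchain hlast
      have hfst : ∀ i, (z i).1 = w := by
        intro i
        induction i using Fin.induction with
        | zero => exact h0.1
        | succ i ih => exact (hchain i).1.trans ih
      exact ⟨hlast.1.trans (hfst _),
        Or.inr ⟨n, fun i => (z i).2, h0.2, fun i => (hchain i).2, hlast.2⟩⟩
  · rintro ⟨rfl, h | ⟨n, z, h0, hchain, hlast⟩⟩
    · exact Or.inl (inl_mem_prodTraced_inl.2 ⟨rfl, h⟩)
    · exact Or.inr ⟨n, fun i => (w', z i), inr_mem_prodTraced_inl.2 ⟨rfl, h0⟩,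
        fun i => inr_mem_prodTraced_inr.2 ⟨rfl, hchain i⟩,
        inl_mem_prodTraced_inr.2 ⟨rfl, hlast⟩⟩

end

theorem trace_prod_distrib_general
    {W X Y Z : Type*}
    (f : (X ⊕ Z) →. (Y ⊕ Z))
    (t : X →. Y) (tF : W × X →. W × Y)
    (ht : IsTrace f t) (htF : IsTrace (prodTraced (W := W) f) tF) :
    ∀ (w : W) (x : X), tF (w, x) = (t x).map fun y => (w, y) := by
  intro w x
  ext ⟨w', y⟩
  rw [htF, traceRel_prodTraced_iff, Part.mem_map_iff, ← ht]
  simp [and_comm, eq_comm]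

/-- The trace operator distributes over products:
`id_W × tr(f) = tr(dst⁻¹ ∘ (id_W × f) ∘ dst)`. -/
theorem trace_prod_distrib
    {W X Y Z : Type*} [MeasurableSpace W] [MeasurableSpace X]
    [MeasurableSpace Y] [MeasurableSpace Z]
    (f : (X ⊕ Z) →. (Y ⊕ Z)) (hf : PartialMeasurable f)
    (t : X →. Y) (tF : W × X →. W × Y)
    (ht : IsTrace f t) (htF : IsTrace (prodTraced (W := W) f) tF) :
    ∀ (w : W) (x : X), tF (w, x) = (t x).map fun y => (w, y) :=
  trace_prod_distrib_general f t tF ht htF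
end

section
/- Behavioural equivalence characterized by external behaviour: for Mealy machines M and N from X to Y (with state spaces being measurable spaces, a distinguished initial state, and partial measurable transition functions (X⁺ + Y⁻) × S → (Y⁺ + X⁻) × S), define β_M : (X⁺ + Y⁻) × L(X⁺ + Y⁻) → (Y⁺ + X⁻) as the input-output response after processing a finite history of inputs from the initial state. Then M and N are related by the reflexive-symmetric-transitive closure of the simulation preorder (M ⪯ N iff there is a measurable map of state spaces preserving the initial state and commuting with the transitions) if and only if β_M = β_N. -/
variable (Xp Xn Yp Yn : Type) [MeasurableSpace Xp] [MeasurableSpace Xn]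
  [MeasurableSpace Yp] [MeasurableSpace Yn]

/-- A Mealy machine from the Int-object `X = (Xp, Xn)` to `Y = (Yp, Yn)`:
a measurable state space with an initial state and a partial transition function
`(X⁺ + Y⁻) × S →. (Y⁺ + X⁻) × S`. -/
structure Mealy : Type 1 where
  State : Type
  ms : MeasurableSpace State
  init : State
  tran : ((Xp ⊕ Yn) × State) →. ((Yp ⊕ Xn) × State)

variable {Xp Xn Yp Yn}

/-- The transition function of the machine is partial measurable. -/
def Mealy.Meas (M : Mealy Xp Xn Yp Yn) : Prop :=
  letI := M.ms
  PartialMeasurable M.tran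

/-- Run the machine from a state through a list of inputs, in order. -/
def Mealy.runFrom (M : Mealy Xp Xn Yp Yn) : M.State → List (Xp ⊕ Yn) → Part M.State
  | s, [] => Part.some s
  | s, z :: u => (M.tran (z, s)).bind fun p => M.runFrom p.2 u

/-- The external behaviour of the machine: the output produced on input `z` after
processing the finite history `hist` of inputs (in order) from the initial state. -/
def Mealy.beta (M : Mealy Xp Xn Yp Yn) (z : Xp ⊕ Yn) (hist : List (Xp ⊕ Yn)) :
    Part (Yp ⊕ Xn) :=
  (M.runFrom M.init hist).bind fun s => (M.tran (z, s)).map Prod.fst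

/-- Simulation preorder: a measurable map of state spaces preserving the initial
state and commuting with the transition functions. -/
def Mealy.Sim (M N : Mealy Xp Xn Yp Yn) : Prop :=
  ∃ f : M.State → N.State,
    (letI := M.ms; letI := N.ms; Measurable f) ∧
    f M.init = N.init ∧
    ∀ (z : Xp ⊕ Yn) (s : M.State),
      N.tran (z, f s) = (M.tran (z, s)).map fun p => (p.1, f p.2)

/-- Behavioural equivalence: the reflexive-symmetric-transitive closure of the
simulation preorder. -/
def Mealy.Eqv (M N : Mealy Xp Xn Yp Yn) : Prop :=
  Relation.EqvGen Mealy.Sim M N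

/-- Auxiliary: congruence for `Part.bind`. -/
theorem Part.bind_congr' {α β : Type*} {x : Part α} {f g : α → Part β}
    (h : ∀ a ∈ x, f a = g a) : x.bind f = x.bind g := by
  ext b
  simp only [Part.mem_bind_iff]
  constructor <;> rintro ⟨a, ha, hb⟩
  · exact ⟨a, ha, by rwa [← h a ha]⟩
  · exact ⟨a, ha, by rwa [h a ha]⟩

/-- The behaviour of a machine started from an arbitrary state. -/
def Mealy.behFrom (M : Mealy Xp Xn Yp Yn) (s : M.State) :
    (Xp ⊕ Yn) → List (Xp ⊕ Yn) → Part (Yp ⊕ Xn) :=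
  fun z hist => (M.runFrom s hist).bind fun t => (M.tran (z, t)).map Prod.fst

theorem sim_run {M N : Mealy Xp Xn Yp Yn} {f : M.State → N.State}
    (hc : ∀ (z : Xp ⊕ Yn) (s : M.State),
      N.tran (z, f s) = (M.tran (z, s)).map fun p => (p.1, f p.2)) :
    ∀ (hist : List (Xp ⊕ Yn)) (s : M.State),
      N.runFrom (f s) hist = (M.runFrom s hist).map f := by
  intro hist
  induction hist with
  | nil => intro s; simp [Mealy.runFrom]
  | cons z u ih =>
    intro s
    simp only [Mealy.runFrom, hc, Part.bind_map, ih, Part.map_bind]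

theorem sim_beta {M N : Mealy Xp Xn Yp Yn} (h : Mealy.Sim M N) :
    ∀ (z : Xp ⊕ Yn) (hist : List (Xp ⊕ Yn)), M.beta z hist = N.beta z hist := by
  obtain ⟨f, _, hi, hc⟩ := h
  intro z hist
  unfold Mealy.beta
  rw [← hi, sim_run hc, Part.bind_map]
  refine Part.bind_congr' fun s _ => ?_
  rw [hc, Part.map_map]
  rfl

/-- The canonical "behaviour" machine for a given behaviour, with the trivial
σ-algebra on its state space of behaviours. -/
def behMachine (b : (Xp ⊕ Yn) → List (Xp ⊕ Yn) → Part (Yp ⊕ Xn)) :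
    Mealy Xp Xn Yp Yn where
  State := (Xp ⊕ Yn) → List (Xp ⊕ Yn) → Part (Yp ⊕ Xn)
  ms := ⊥
  init := b
  tran := fun zc => (zc.2 zc.1 []).map fun o => (o, fun z' hist => zc.2 z' (zc.1 :: hist))

theorem measurable_to_bot {α β : Type*} [MeasurableSpace α] (f : α → β) :
    @Measurable α β _ ⊥ f := by
  intro s hs
  rcases MeasurableSpace.measurableSet_bot_iff.mp hs with rfl | rfl <;> simp

theorem behFrom_shift (M : Mealy Xp Xn Yp Yn) {z : Xp ⊕ Yn} {s : M.State}
    {p : (Yp ⊕ Xn) × M.State} (hp : p ∈ M.tran (z, s)) :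
    (fun z' hist => M.behFrom s z' (z :: hist)) = M.behFrom p.2 := by
  funext z' hist
  simp only [Mealy.behFrom, Mealy.runFrom, Part.eq_some_iff.mpr hp, Part.bind_assoc,
    Part.bind_some]

theorem sim_behMachine (M : Mealy Xp Xn Yp Yn) :
    Mealy.Sim M (behMachine (M.behFrom M.init)) := by
  refine ⟨M.behFrom, @measurable_to_bot _ _ M.ms _, rfl, fun z s => ?_⟩
  show (M.behFrom s z []).map _ = _
  have h1 : M.behFrom s z [] = (M.tran (z, s)).map Prod.fst := by
    simp [Mealy.behFrom, Mealy.runFrom]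
  rw [h1, Part.map_map, ← Part.bind_some_eq_map, ← Part.bind_some_eq_map]
  refine Part.bind_congr' fun p hp => ?_
  simp only [Function.comp_apply, behFrom_shift M hp]
  rfl

/-- Behavioural equivalence of Mealy machines is characterized by their external
input/output behaviour: `M ≃ N` iff `β_M = β_N`. -/
theorem mealy_eqv_iff_beta_eq
    (M N : Mealy Xp Xn Yp Yn) (hM : M.Meas) (hN : N.Meas) :
    M.Eqv N ↔ ∀ (z : Xp ⊕ Yn) (hist : List (Xp ⊕ Yn)), M.beta z hist = N.beta z hist := by
  clear hM hN
  constructor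
  · intro h
    induction h with
    | rel _ _ h => exact sim_beta h
    | refl => intro z hist; rfl
    | symm _ _ _ ih => intro z hist; exact (ih z hist).symm
    | trans _ _ _ _ _ ih1 ih2 => intro z hist; exact (ih1 z hist).trans (ih2 z hist)
  · intro h
    have hMB := sim_behMachine M
    have hNB := sim_behMachine N
    have hbeh : M.behFrom M.init = N.behFrom N.init := by
      funext z hist
      exact h z hist
    rw [hbeh] at hMB
    exact Relation.EqvGen.trans _ _ _ (Relation.EqvGen.rel _ _ hMB)
      (Relation.EqvGen.symm _ _ (Relation.EqvGen.rel _ _ hNB))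
end

section
/- The set of behavioural-equivalence classes of Mealy machines from X to Y, ordered by [M] ≤ [N] iff there exist representatives M' ≃ M and N' ≃ N with the same state space and initial state such that the graph of the transition function of M' is contained in that of N', is a pointed ω-complete partial order: it has a least element and every ascending ω-chain has a least upper bound. -/
variable (Xp Xn Yp Yn : Type) [MeasurableSpace Xp] [MeasurableSpace Xn]
  [MeasurableSpace Yp] [MeasurableSpace Yn]

variable {Xp Xn Yp Yn}

/-- Order on (behavioural-equivalence classes of) Mealy machines: `M ≤ N` iff there
are representatives `M' ≃ M` and `N' ≃ N` with the same state space, measurable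
structure and initial state, whose transition functions are partial measurable and
such that the graph of the transition function of `M'` is contained in that of `N'`. -/
def Mealy.Le (M N : Mealy Xp Xn Yp Yn) : Prop :=
  ∃ (S : Type) (inst : MeasurableSpace S) (s0 : S)
    (tM tN : ((Xp ⊕ Yn) × S) →. ((Yp ⊕ Xn) × S)),
    (letI := inst; PartialMeasurable tM) ∧
    (letI := inst; PartialMeasurable tN) ∧
    Mealy.Eqv M ⟨S, inst, s0, tM⟩ ∧
    Mealy.Eqv N ⟨S, inst, s0, tN⟩ ∧
    ∀ a b, b ∈ tM a → b ∈ tN a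

section PMAux
open MeasurableSpace
variable {X Y Z W : Type*}

theorem pm_dom [MeasurableSpace X] [MeasurableSpace Y] {f : X →. Y}
    (hf : PartialMeasurable f) : MeasurableSet {x | (f x).Dom} := by
  have := hf Set.univ MeasurableSet.univ
  have e : {x | ∃ y ∈ f x, y ∈ Set.univ} = {x | (f x).Dom} := by
    ext x; simp [Part.dom_iff_mem]
  rwa [e] at this

theorem pm_of_generateFrom [MeasurableSpace X] {g : Set (Set Y)} {f : X →. Y}
    (hdom : MeasurableSet {x | (f x).Dom})
    (h : ∀ A ∈ g, MeasurableSet {x | ∃ y ∈ f x, y ∈ A}) :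
    @PartialMeasurable X Y _ (generateFrom g) f := by
  intro A hA
  induction hA with
  | basic s hs => exact h s hs
  | empty =>
      have e : {x | ∃ y ∈ f x, y ∈ (∅ : Set Y)} = ∅ := by ext x; simp
      rw [e]; exact MeasurableSet.empty
  | compl s _ ih =>
      have e : {x | ∃ y ∈ f x, y ∈ sᶜ} = {x | (f x).Dom} \ {x | ∃ y ∈ f x, y ∈ s} := by
        ext x
        constructor
        · rintro ⟨y, hy, hys⟩
          exact ⟨Part.dom_iff_mem.2 ⟨y, hy⟩, fun ⟨y', hy', hy's⟩ =>
            hys (Part.mem_unique hy hy' ▸ hy's)⟩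
        · rintro ⟨hd, hn⟩
          exact ⟨(f x).get hd, Part.get_mem hd, fun hs => hn ⟨(f x).get hd, Part.get_mem hd, hs⟩⟩
      rw [e]; exact hdom.diff ih
  | iUnion s _ ih =>
      have e : {x | ∃ y ∈ f x, y ∈ ⋃ i, s i} = ⋃ i, {x | ∃ y ∈ f x, y ∈ s i} := by
        ext x; simp only [Set.mem_iUnion, Set.mem_setOf_eq]
        constructor
        · rintro ⟨y, hy, i, hi⟩; exact ⟨i, y, hy, hi⟩
        · rintro ⟨i, y, hy, hi⟩; exact ⟨y, hy, i, hi⟩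
      rw [e]; exact MeasurableSet.iUnion ih

theorem pm_prod_target [MeasurableSpace X] [MeasurableSpace Y] [MeasurableSpace Z]
    {f : X →. Y × Z} (hdom : MeasurableSet {x | (f x).Dom})
    (h : ∀ B : Set Y, ∀ C : Set Z, MeasurableSet B → MeasurableSet C →
      MeasurableSet {x | ∃ p ∈ f x, p.1 ∈ B ∧ p.2 ∈ C}) :
    PartialMeasurable f := by
  have key := @pm_of_generateFrom X (Y × Z) _
    (Set.image2 (· ×ˢ ·) { s : Set Y | MeasurableSet s } { t : Set Z | MeasurableSet t }) f hdom ?_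
  · rwa [generateFrom_prod] at key
  · rintro A ⟨B, hB, C, hC, rfl⟩
    have e : {x | ∃ y ∈ f x, y ∈ B ×ˢ C} = {x | ∃ p ∈ f x, p.1 ∈ B ∧ p.2 ∈ C} := by
      ext x; simp [Set.mem_prod]
    rw [e]; exact h B C hB hC

theorem pm_comp [MeasurableSpace X] [MeasurableSpace Y] [MeasurableSpace Z]
    {f : Y →. Z} {g : X → Y} (hf : PartialMeasurable f) (hg : Measurable g) :
    PartialMeasurable fun x => f (g x) := by
  intro A hA
  exact hg (hf A hA)

theorem pm_map [MeasurableSpace X] [MeasurableSpace Y] [MeasurableSpace Z]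
    {f : X →. Y} {h : Y → Z} (hf : PartialMeasurable f) (hh : Measurable h) :
    PartialMeasurable fun x => (f x).map h := by
  intro A hA
  have e : {x | ∃ z ∈ (f x).map h, z ∈ A} = {x | ∃ y ∈ f x, y ∈ h ⁻¹' A} := by
    ext x
    simp only [Part.mem_map_iff, Set.mem_setOf_eq, Set.mem_preimage]
    constructor
    · rintro ⟨z, ⟨y, hy, rfl⟩, hz⟩; exact ⟨y, hy, hz⟩
    · rintro ⟨y, hy, hz⟩; exact ⟨h y, ⟨y, hy, rfl⟩, hz⟩
  rw [e]; exact hf _ (hh hA)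

theorem pm_pair [MeasurableSpace X] [MeasurableSpace Y] [MeasurableSpace Z]
    {f : X →. Y} {g : X → Z} (hf : PartialMeasurable f) (hg : Measurable g) :
    PartialMeasurable fun x => (f x).map fun y => (y, g x) := by
  apply pm_prod_target
  · have e : {x | (Part.map (fun y => (y, g x)) (f x)).Dom} = {x | (f x).Dom} := by
      ext x; simp only [Set.mem_setOf_eq, Part.dom_iff_mem, Part.mem_map_iff]; tauto
    rw [e]; exact pm_dom hf
  · intro B C hB hC
    have e : {x | ∃ p ∈ (f x).map fun y => (y, g x), p.1 ∈ B ∧ p.2 ∈ C}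
        = {x | ∃ y ∈ f x, y ∈ B} ∩ g ⁻¹' C := by
      ext x
      simp only [Part.mem_map_iff, Set.mem_setOf_eq, Set.mem_inter_iff, Set.mem_preimage]
      constructor
      · rintro ⟨p, ⟨y, hy, rfl⟩, h1, h2⟩; exact ⟨⟨y, hy, h1⟩, h2⟩
      · rintro ⟨⟨y, hy, h1⟩, h2⟩; exact ⟨(y, g x), ⟨y, hy, rfl⟩, h1, h2⟩
    rw [e]; exact (hf B hB).inter (hg hC)

theorem pm_restrict [MeasurableSpace X] [MeasurableSpace Y]
    {f : X →. Y} {E : Set X} (hf : PartialMeasurable f) (hE : MeasurableSet E) :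
    PartialMeasurable fun x => Part.mk ((f x).Dom ∧ x ∈ E) (fun h => (f x).get h.1) := by
  intro A hA
  have e : {x | ∃ y ∈ Part.mk ((f x).Dom ∧ x ∈ E) (fun h => (f x).get h.1), y ∈ A}
      = {x | ∃ y ∈ f x, y ∈ A} ∩ E := by
    ext x
    simp only [Part.mem_mk_iff, Set.mem_setOf_eq, Set.mem_inter_iff]
    constructor
    · rintro ⟨y, ⟨⟨hd, hxE⟩, rfl⟩, hyA⟩
      exact ⟨⟨(f x).get hd, Part.get_mem hd, hyA⟩, hxE⟩
    · rintro ⟨⟨y, hy, hyA⟩, hxE⟩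
      rcases hy with ⟨hd, rfl⟩
      exact ⟨(f x).get hd, ⟨⟨hd, hxE⟩, rfl⟩, hyA⟩
  rw [e]; exact (hf A hA).inter hE

end PMAux


set_option linter.unusedSectionVars false

section MealyAux
open MeasurableSpace

namespace Mealy

variable {M N : Mealy Xp Xn Yp Yn}

/-- Extension of the transition function to the state space with an added dead state. -/
def liftTran (M : Mealy Xp Xn Yp Yn) :
    ((Xp ⊕ Yn) × (M.State ⊕ Unit)) →. ((Yp ⊕ Xn) × (M.State ⊕ Unit)) :=
  fun x => match x.2 with
  | Sum.inl a => (M.tran (x.1, a)).map fun p => (p.1, Sum.inl p.2)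
  | Sum.inr _ => Part.none

@[simp] theorem liftTran_inl (z : Xp ⊕ Yn) (a : M.State) :
    M.liftTran (z, Sum.inl a) = (M.tran (z, a)).map fun p => (p.1, Sum.inl p.2) := rfl

@[simp] theorem liftTran_inr (z : Xp ⊕ Yn) (u : Unit) :
    M.liftTran (z, Sum.inr u) = Part.none := rfl

/-- The machine `M` extended with a dead state. -/
def ext (M : Mealy Xp Xn Yp Yn) : Mealy Xp Xn Yp Yn :=
  letI := M.ms
  ⟨M.State ⊕ Unit, inferInstance, Sum.inl M.init, M.liftTran⟩

theorem pm_liftTran (hM : M.Meas) : letI := M.ms; PartialMeasurable M.liftTran := by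
  letI := M.ms
  intro A hA
  have hmap : Measurable fun p : (Yp ⊕ Xn) × M.State => (p.1, (Sum.inl p.2 : M.State ⊕ Unit)) :=
    measurable_fst.prodMk (measurable_inl.comp measurable_snd)
  have hW : MeasurableSet {p : (Xp ⊕ Yn) × M.State |
      ∃ y ∈ (M.tran p).map fun q => (q.1, (Sum.inl q.2 : M.State ⊕ Unit)), y ∈ A} :=
    pm_map hM hmap A hA
  set e := MeasurableEquiv.prodSumDistrib (Xp ⊕ Yn) M.State Unit with he
  have : {x | ∃ y ∈ M.liftTran x, y ∈ A} = e ⁻¹' (Sum.inl '' {p : (Xp ⊕ Yn) × M.State |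
      ∃ y ∈ (M.tran p).map fun q => (q.1, (Sum.inl q.2 : M.State ⊕ Unit)), y ∈ A}) := by
    ext x
    obtain ⟨z, a | u⟩ := x
    · have : e (z, Sum.inl a) = Sum.inl (z, a) := rfl
      simp only [Set.mem_preimage, this, Set.mem_image]
      constructor
      · rintro ⟨y, hy, hyA⟩
        exact ⟨(z, a), ⟨y, hy, hyA⟩, rfl⟩
      · rintro ⟨p, hp, hpe⟩
        obtain ⟨rfl, rfl⟩ : p.1 = z ∧ p.2 = a := by
          have := Sum.inl_injective hpe
          exact ⟨congrArg Prod.fst this, congrArg Prod.snd this⟩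
        exact hp
    · have : e (z, Sum.inr u) = Sum.inr (z, u) := rfl
      simp [this, Set.mem_preimage, liftTran]
  rw [this]
  exact e.measurable (hW.inl_image)

open Classical in
/-- Total version of a partial function, with default value. -/
noncomputable def pfunTotal {X Y : Type*} (f : X →. Y) (d : Y) : X → Y :=
  fun x => if h : (f x).Dom then (f x).get h else d

theorem measurable_pfunTotal {X Y : Type*} [MeasurableSpace X] [MeasurableSpace Y]
    {f : X →. Y} (hf : PartialMeasurable f) (d : Y) : Measurable (pfunTotal f d) := by
  intro B hB
  by_cases hd : d ∈ B
  · have : pfunTotal f d ⁻¹' B = {x | ∃ y ∈ f x, y ∈ B} ∪ {x | (f x).Dom}ᶜ := by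
      ext x
      simp only [Set.mem_preimage, Set.mem_union, Set.mem_setOf_eq, Set.mem_compl_iff,
        pfunTotal]
      by_cases h : (f x).Dom
      · simp only [dif_pos h]
        constructor
        · intro hB'; exact Or.inl ⟨_, Part.get_mem h, hB'⟩
        · rintro (⟨y, hy, hyB⟩ | hc)
          · rwa [Part.get_eq_of_mem hy h]
          · exact absurd h hc
      · simp only [dif_neg h]
        constructor
        · intro _; exact Or.inr h
        · intro _; exact hd
    rw [this]; exact (hf B hB).union (pm_dom hf).compl
  · have : pfunTotal f d ⁻¹' B = {x | ∃ y ∈ f x, y ∈ B} := by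
      ext x
      simp only [Set.mem_preimage, Set.mem_setOf_eq, pfunTotal]
      by_cases h : (f x).Dom
      · simp only [dif_pos h]
        constructor
        · intro hB'; exact ⟨_, Part.get_mem h, hB'⟩
        · rintro ⟨y, hy, hyB⟩; rwa [Part.get_eq_of_mem hy h]
      · simp only [dif_neg h]
        constructor
        · intro h'; exact absurd h' hd
        · rintro ⟨y, hy, _⟩; exact absurd (Part.dom_iff_mem.2 ⟨y, hy⟩) h
    rw [this]; exact hf B hB

/-- Totalised one-step state update on the extended state space. -/
noncomputable def total (M : Mealy Xp Xn Yp Yn) :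
    ((Xp ⊕ Yn) × (M.State ⊕ Unit)) → (M.State ⊕ Unit) :=
  pfunTotal (fun x => (M.liftTran x).map Prod.snd) (Sum.inr ())

theorem measurable_total (hM : M.Meas) : letI := M.ms; Measurable M.total :=
  letI := M.ms
  measurable_pfunTotal (pm_map (pm_liftTran hM) measurable_snd) _

theorem total_inl {z : Xp ⊕ Yn} {a : M.State} {p} (hp : p ∈ M.tran (z, a)) :
    M.total (z, Sum.inl a) = Sum.inl p.2 := by
  have hd : ((M.liftTran (z, Sum.inl a)).map Prod.snd).Dom := by
    simp only [liftTran_inl, Part.map_map]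
    exact Part.dom_iff_mem.2 ⟨_, Part.mem_map _ hp⟩
  have : Sum.inl p.2 ∈ (M.liftTran (z, Sum.inl a)).map Prod.snd := by
    simp only [liftTran_inl, Part.map_map]
    exact Part.mem_map _ hp
  simp only [total, pfunTotal, dif_pos hd]
  exact Part.get_eq_of_mem this hd

theorem total_inl_none {z : Xp ⊕ Yn} {a : M.State} (h : ¬(M.tran (z, a)).Dom) :
    M.total (z, Sum.inl a) = Sum.inr () := by
  have hd : ¬((M.liftTran (z, Sum.inl a)).map Prod.snd).Dom := by
    simpa [liftTran_inl] using h
  simp only [total, pfunTotal, dif_neg hd]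

@[simp] theorem total_inr {z : Xp ⊕ Yn} {u : Unit} :
    M.total (z, Sum.inr u) = Sum.inr () := by
  simp only [total, pfunTotal]
  rw [dif_neg]
  simp [liftTran_inr]

/-- Totalised run on the extended state space. -/
noncomputable def totRun (M : Mealy Xp Xn Yp Yn) (a : M.State ⊕ Unit)
    (u : List (Xp ⊕ Yn)) : M.State ⊕ Unit :=
  u.foldl (fun a z => M.total (z, a)) a

@[simp] theorem totRun_nil (a : M.State ⊕ Unit) : M.totRun a [] = a := rfl

theorem totRun_cons (a : M.State ⊕ Unit) (z : Xp ⊕ Yn) (u : List (Xp ⊕ Yn)) :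
    M.totRun a (z :: u) = M.totRun (M.total (z, a)) u := rfl

theorem totRun_append (a : M.State ⊕ Unit) (u : List (Xp ⊕ Yn)) (z : Xp ⊕ Yn) :
    M.totRun a (u ++ [z]) = M.total (z, M.totRun a u) := by
  simp [totRun, List.foldl_append]

theorem totRun_inr (u : List (Xp ⊕ Yn)) (x : Unit) :
    M.totRun (Sum.inr x) u = Sum.inr () := by
  induction u with
  | nil => rfl
  | cons z u ih => rw [totRun_cons, total_inr]; exact ih

theorem totRun_of_runFrom : ∀ (u : List (Xp ⊕ Yn)) (a s' : M.State),
    s' ∈ M.runFrom a u → M.totRun (Sum.inl a) u = Sum.inl s' := by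
  intro u
  induction u with
  | nil =>
      intro a s' hs'
      simp only [runFrom] at hs'
      rw [Part.mem_some_iff] at hs'
      simp [hs']
  | cons z u ih =>
      intro a s' hs'
      simp only [runFrom] at hs'
      rw [Part.mem_bind_iff] at hs'
      obtain ⟨p, hp, hrun⟩ := hs'
      rw [totRun_cons, total_inl hp]
      exact ih p.2 s' hrun

theorem runFrom_of_totRun : ∀ (u : List (Xp ⊕ Yn)) (a s' : M.State),
    M.totRun (Sum.inl a) u = Sum.inl s' → s' ∈ M.runFrom a u := by
  intro u
  induction u with
  | nil =>
      intro a s' h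
      rw [totRun_nil] at h
      cases Sum.inl_injective h
      exact Part.mem_some _
  | cons z u ih =>
      intro a s' h
      rw [totRun_cons] at h
      by_cases hd : (M.tran (z, a)).Dom
      · set p := (M.tran (z, a)).get hd with hp
        have hmem : p ∈ M.tran (z, a) := Part.get_mem hd
        rw [total_inl hmem] at h
        rw [runFrom, Part.mem_bind_iff]
        exact ⟨p, hmem, ih _ _ h⟩
      · rw [total_inl_none hd, totRun_inr] at h
        exact absurd h (by simp)

theorem runFrom_append (u v : List (Xp ⊕ Yn)) : ∀ s : M.State,
    M.runFrom s (u ++ v) = (M.runFrom s u).bind fun s' => M.runFrom s' v := by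
  induction u with
  | nil => intro s; simp [runFrom]
  | cons z u ih =>
      intro s
      simp only [List.cons_append, runFrom, Part.bind_assoc]
      congr 1
      funext p
      exact ih p.2

theorem runFrom_of_comm {M N : Mealy Xp Xn Yp Yn} {f : M.State → N.State}
    (hcomm : ∀ (z : Xp ⊕ Yn) (s : M.State),
      N.tran (z, f s) = (M.tran (z, s)).map fun p => (p.1, f p.2)) :
    ∀ (u : List (Xp ⊕ Yn)) (s : M.State),
      N.runFrom (f s) u = (M.runFrom s u).map f := by
  intro u
  induction u with
  | nil => intro s; simp [runFrom]
  | cons z u ih =>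
      intro s
      apply Part.ext
      intro t
      simp only [runFrom, Part.mem_bind_iff, Part.mem_map_iff, hcomm]
      constructor
      · rintro ⟨q, ⟨p, hp, rfl⟩, ht⟩
        rw [ih p.2] at ht
        rcases (Part.mem_map_iff _).1 ht with ⟨s', hs', rfl⟩
        exact ⟨s', ⟨p, hp, hs'⟩, rfl⟩
      · rintro ⟨s', ⟨p, hp, hs'⟩, rfl⟩
        refine ⟨(p.1, f p.2), ⟨p, hp, rfl⟩, ?_⟩
        rw [ih p.2]
        exact Part.mem_map f hs'

theorem beta_eq_of_sim {M N : Mealy Xp Xn Yp Yn} (h : M.Sim N) : M.beta = N.beta := by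
  obtain ⟨f, -, hinit, hcomm⟩ := h
  funext z hist
  apply Part.ext
  intro y
  simp only [beta, ← hinit, runFrom_of_comm hcomm, Part.mem_bind_iff, Part.mem_map_iff]
  constructor
  · rintro ⟨s, hs, p, hp, rfl⟩
    refine ⟨f s, ⟨s, hs, rfl⟩, ?_⟩
    rw [hcomm]
    exact ⟨(p.1, f p.2), Part.mem_map _ hp, rfl⟩
  · rintro ⟨t, ⟨s, hs, rfl⟩, hy⟩
    rw [hcomm] at hy
    rcases hy with ⟨q, hq, rfl⟩
    rcases (Part.mem_map_iff _).1 hq with ⟨p, hp, rfl⟩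
    exact ⟨s, hs, p, hp, rfl⟩

theorem beta_eq_of_eqv {M N : Mealy Xp Xn Yp Yn} (h : M.Eqv N) : M.beta = N.beta := by
  induction h with
  | rel _ _ hr => exact beta_eq_of_sim hr
  | refl _ => rfl
  | symm _ _ _ ih => exact ih.symm
  | trans _ _ _ _ _ ih1 ih2 => exact ih1.trans ih2

/-- Pointwise containment of behaviours. -/
def BetaLe (M N : Mealy Xp Xn Yp Yn) : Prop :=
  ∀ (z : Xp ⊕ Yn) (hist : List (Xp ⊕ Yn)) (y : Yp ⊕ Xn),
    y ∈ M.beta z hist → y ∈ N.beta z hist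

theorem BetaLe.trans {M N L : Mealy Xp Xn Yp Yn} (h1 : BetaLe M N) (h2 : BetaLe N L) :
    BetaLe M L := fun z hist y hy => h2 z hist y (h1 z hist y hy)

theorem BetaLe.refl (M : Mealy Xp Xn Yp Yn) : BetaLe M M := fun _ _ _ h => h

theorem betaLe_of_sub {S : Type} {inst : MeasurableSpace S} {s0 : S}
    {t1 t2 : ((Xp ⊕ Yn) × S) →. ((Yp ⊕ Xn) × S)}
    (hsub : ∀ a b, b ∈ t1 a → b ∈ t2 a) :
    BetaLe (⟨S, inst, s0, t1⟩ : Mealy Xp Xn Yp Yn) ⟨S, inst, s0, t2⟩ := by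
  have hrun : ∀ (u : List (Xp ⊕ Yn)) (s s' : S),
      s' ∈ (⟨S, inst, s0, t1⟩ : Mealy Xp Xn Yp Yn).runFrom s u →
      s' ∈ (⟨S, inst, s0, t2⟩ : Mealy Xp Xn Yp Yn).runFrom s u := by
    intro u
    induction u with
    | nil => intro s s' h; exact h
    | cons z u ih =>
        intro s s' h
        simp only [runFrom, Part.mem_bind_iff] at h ⊢
        obtain ⟨p, hp, hr⟩ := h
        exact ⟨p, hsub _ _ hp, ih _ _ hr⟩
  intro z hist y hy
  simp only [beta, Part.mem_bind_iff, Part.mem_map_iff] at hy ⊢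
  obtain ⟨s, hs, p, hp, rfl⟩ := hy
  exact ⟨s, hrun _ _ _ hs, p, hsub _ _ hp, rfl⟩

theorem betaLe_of_le {M N : Mealy Xp Xn Yp Yn} (h : M.Le N) : BetaLe M N := by
  obtain ⟨S, inst, s0, tM, tN, -, -, eM, eN, hsub⟩ := h
  intro z hist y hy
  rw [beta_eq_of_eqv eN]
  rw [beta_eq_of_eqv eM] at hy
  exact betaLe_of_sub hsub z hist y hy

section Constr

variable (M N : Mealy Xp Xn Yp Yn)

/-- Lockstep transition: drive with `N`, carry along the totalised `M`-state. -/
noncomputable def lockT :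
    ((Xp ⊕ Yn) × ((M.State ⊕ Unit) × N.State)) →.
      ((Yp ⊕ Xn) × ((M.State ⊕ Unit) × N.State)) :=
  fun x => (N.tran (x.1, x.2.2)).map fun q => (q.1, (M.total (x.1, x.2.1), q.2))

/-- The lockstep machine driven by `N`. -/
noncomputable def lockN : Mealy Xp Xn Yp Yn :=
  letI := M.ms; letI := N.ms
  ⟨(M.State ⊕ Unit) × N.State, inferInstance, (Sum.inl M.init, N.init), lockT M N⟩

/-- Reachable states of the lockstep machine. -/
def reach : Set ((M.State ⊕ Unit) × N.State) :=
  {s | ∃ hist, s ∈ (lockN M N).runFrom (lockN M N).init hist}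

theorem reach_step {s : (M.State ⊕ Unit) × N.State} (hs : s ∈ reach M N)
    {z : Xp ⊕ Yn} {p} (hp : p ∈ lockT M N (z, s)) : p.2 ∈ reach M N := by
  obtain ⟨hist, hrun⟩ := hs
  refine ⟨hist ++ [z], ?_⟩
  rw [runFrom_append]
  refine Part.mem_bind_iff.2 ⟨s, hrun, ?_⟩
  simp only [runFrom]
  exact Part.mem_bind_iff.2 ⟨p, hp, Part.mem_some _⟩

theorem lock_run : ∀ (u : List (Xp ⊕ Yn)) (a : M.State ⊕ Unit) (b : N.State)
    (s' : (M.State ⊕ Unit) × N.State), s' ∈ (lockN M N).runFrom (a, b) u →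
    s'.1 = M.totRun a u ∧ s'.2 ∈ N.runFrom b u := by
  intro u
  induction u with
  | nil =>
      intro a b s' h
      simp only [runFrom, Part.mem_some_iff] at h
      obtain rfl := Part.mem_some_iff.1 h
      exact ⟨rfl, Part.mem_some _⟩
  | cons z u ih =>
      intro a b s' h
      simp only [runFrom, Part.mem_bind_iff] at h
      obtain ⟨p, hp, hrun⟩ := Part.mem_bind_iff.1 h
      rcases (Part.mem_map_iff _).1 hp with ⟨q, hq, rfl⟩
      obtain ⟨h1, h2⟩ := ih _ _ _ hrun
      constructor
      · rw [h1, totRun_cons]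
      · simp only [runFrom, Part.mem_bind_iff]
        exact ⟨q, hq, h2⟩

/-- Initial reachable state. -/
noncomputable def reachInit : ↥(reach M N) :=
  ⟨(Sum.inl M.init, N.init), ⟨[], by simp only [runFrom]; exact Part.mem_some _⟩⟩

/-- The `N`-side restricted transition on reachable states. -/
noncomputable def conTN : ((Xp ⊕ Yn) × ↥(reach M N)) →. ((Yp ⊕ Xn) × ↥(reach M N)) :=
  fun x => ⟨(lockT M N (x.1, x.2.val)).Dom,
    fun h => (((lockT M N (x.1, x.2.val)).get h).1,
      ⟨((lockT M N (x.1, x.2.val)).get h).2,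
        reach_step M N x.2.prop (Part.get_mem h)⟩)⟩

/-- Predicate: the `M`-component is live and can make a step. -/
def mdom (x : (Xp ⊕ Yn) × ((M.State ⊕ Unit) × N.State)) : Prop :=
  ∃ a₀ : M.State, x.2.1 = Sum.inl a₀ ∧ (M.tran (x.1, a₀)).Dom

/-- The `M`-side restricted transition on reachable states. -/
noncomputable def conTM : ((Xp ⊕ Yn) × ↥(reach M N)) →. ((Yp ⊕ Xn) × ↥(reach M N)) :=
  fun x => ⟨(lockT M N (x.1, x.2.val)).Dom ∧ mdom M N (x.1, x.2.val),
    fun h => (((lockT M N (x.1, x.2.val)).get h.1).1,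
      ⟨((lockT M N (x.1, x.2.val)).get h.1).2,
        reach_step M N x.2.prop (Part.get_mem h.1)⟩)⟩

theorem mem_conTN {x : (Xp ⊕ Yn) × ↥(reach M N)} {b : (Yp ⊕ Xn) × ↥(reach M N)} :
    b ∈ conTN M N x ↔ (b.1, b.2.val) ∈ lockT M N (x.1, x.2.val) := by
  simp only [conTN, Part.mem_mk_iff]
  constructor
  · rintro ⟨h, rfl⟩
    simpa using Part.get_mem h
  · rintro ⟨h, hb⟩
    refine ⟨h, ?_⟩
    have h1 : ((lockT M N (x.1, x.2.val)).get h).1 = b.1 := by rw [hb]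
    have h2 : ((lockT M N (x.1, x.2.val)).get h).2 = b.2.val := by rw [hb]
    refine Prod.ext h1 (Subtype.ext h2)

theorem mem_conTM {x : (Xp ⊕ Yn) × ↥(reach M N)} {b : (Yp ⊕ Xn) × ↥(reach M N)} :
    b ∈ conTM M N x ↔ (b.1, b.2.val) ∈ lockT M N (x.1, x.2.val) ∧ mdom M N (x.1, x.2.val) := by
  simp only [conTM, Part.mem_mk_iff]
  constructor
  · rintro ⟨⟨h, hm⟩, rfl⟩
    exact ⟨by simpa using Part.get_mem h, hm⟩
  · rintro ⟨⟨h, hb⟩, hm⟩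
    refine ⟨⟨h, hm⟩, ?_⟩
    have h1 : ((lockT M N (x.1, x.2.val)).get h).1 = b.1 := by rw [hb]
    have h2 : ((lockT M N (x.1, x.2.val)).get h).2 = b.2.val := by rw [hb]
    exact Prod.ext h1 (Subtype.ext h2)

theorem conTM_le_conTN : ∀ a b, b ∈ conTM M N a → b ∈ conTN M N a := by
  intro a b hb
  exact (mem_conTN M N).2 ((mem_conTM M N).1 hb).1

end Constr

section ConstrSim

variable (M N : Mealy Xp Xn Yp Yn)

theorem sim_ext : M.Sim (ext M) :=
  ⟨Sum.inl, (letI := M.ms; measurable_inl), rfl, fun _ _ => rfl⟩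

theorem reach_char {s : (M.State ⊕ Unit) × N.State} (hs : s ∈ reach M N) :
    ∃ hist, s.1 = M.totRun (Sum.inl M.init) hist ∧ s.2 ∈ N.runFrom N.init hist := by
  obtain ⟨hist, h⟩ := hs
  exact ⟨hist, lock_run M N hist (Sum.inl M.init) N.init s h⟩

theorem mem_beta {z hist} {y : Yp ⊕ Xn} :
    y ∈ M.beta z hist ↔ ∃ s ∈ M.runFrom M.init hist, ∃ p ∈ M.tran (z, s), p.1 = y := by
  simp only [beta, Part.mem_bind_iff, Part.mem_map_iff]

theorem sim_conN :
    Mealy.Sim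
      (⟨↥(reach M N), (letI := M.ms; letI := N.ms; inferInstance), reachInit M N,
        conTN M N⟩ : Mealy Xp Xn Yp Yn) N := by
  refine ⟨fun r => r.val.2, ?_, rfl, ?_⟩
  · letI := M.ms; letI := N.ms
    exact measurable_snd.comp measurable_subtype_coe
  · intro z r
    apply Part.ext
    intro q
    simp only [Part.mem_map_iff]
    constructor
    · intro hq
      have hp : ((q.1, (M.total (z, r.val.1), q.2)) : (Yp ⊕ Xn) × _) ∈
          lockT M N (z, r.val) := Part.mem_map _ hq
      exact ⟨(q.1, ⟨(M.total (z, r.val.1), q.2), reach_step M N r.prop hp⟩),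
        (mem_conTN M N).2 hp, rfl⟩
    · rintro ⟨b, hb, rfl⟩
      have hl := (mem_conTN M N).1 hb
      rcases (Part.mem_map_iff _).1 hl with ⟨q', hq', heq⟩
      have h1 : q'.1 = b.1 := congrArg Prod.fst heq
      have h2 : q'.2 = b.2.val.2 := congrArg (fun v => v.2.2) heq
      rw [← h1, ← h2]
      simpa using hq'

theorem sim_conM (h : BetaLe M N) :
    Mealy.Sim
      (⟨↥(reach M N), (letI := M.ms; letI := N.ms; inferInstance), reachInit M N,
        conTM M N⟩ : Mealy Xp Xn Yp Yn) (ext M) := by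
  refine ⟨fun r => r.val.1, ?_, rfl, ?_⟩
  · letI := M.ms; letI := N.ms; letI := (ext M).ms
    exact measurable_fst.comp measurable_subtype_coe
  · intro z r
    obtain ⟨hist, ha, hbrun⟩ := reach_char M N r.prop
    apply Part.ext
    intro y
    simp only [Part.mem_map_iff]
    constructor
    · intro hy
      rcases hr : r.val.1 with a₀ | u
      swap
      · rw [hr] at hy
        exact absurd hy (by simp [ext, liftTran_inr]; exact Part.notMem_none _)
      rw [hr] at hy
      have hy' : y ∈ (M.tran (z, a₀)).map fun p => (p.1, (Sum.inl p.2 : M.State ⊕ Unit)) := hy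
      rcases (Part.mem_map_iff _).1 hy' with ⟨p, hp, rfl⟩
      have hrunM : a₀ ∈ M.runFrom M.init hist :=
        runFrom_of_totRun hist M.init a₀ (by rw [← ha, hr])
      have hbM : p.1 ∈ M.beta z hist := (mem_beta M).2 ⟨a₀, hrunM, p, hp, rfl⟩
      obtain ⟨s, hs, q, hq, hq1⟩ := (mem_beta N).1 (h z hist p.1 hbM)
      have hseq : s = r.val.2 := Part.mem_unique hs hbrun
      rw [hseq] at hq
      have hplock : ((p.1, (Sum.inl p.2, q.2)) : (Yp ⊕ Xn) × ((M.State ⊕ Unit) × N.State)) ∈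
          lockT M N (z, r.val) := by
        show _ ∈ (N.tran (z, r.val.2)).map fun q' => (q'.1, (M.total (z, r.val.1), q'.2))
        refine (Part.mem_map_iff _).2 ⟨q, hq, ?_⟩
        rw [hq1, hr, total_inl hp]
      refine ⟨(p.1, ⟨(Sum.inl p.2, q.2), reach_step M N r.prop hplock⟩),
        (mem_conTM M N).2 ⟨hplock, a₀, hr, Part.dom_iff_mem.2 ⟨p, hp⟩⟩, rfl⟩
    · rintro ⟨b, hb, rfl⟩
      obtain ⟨hlock, a₀, hr, hdom⟩ := (mem_conTM M N).1 hb
      rcases (Part.mem_map_iff _).1 hlock with ⟨q, hq, heq⟩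
      set p := (M.tran (z, a₀)).get hdom with hpdef
      have hp : p ∈ M.tran (z, a₀) := Part.get_mem hdom
      have htot : M.total (z, r.val.1) = Sum.inl p.2 := by rw [hr]; exact total_inl hp
      have hb2 : b.2.val.1 = Sum.inl p.2 := by
        have := congrArg (fun v => v.2.1) heq
        simp only at this
        rw [← this, htot]
      have hrunM : a₀ ∈ M.runFrom M.init hist :=
        runFrom_of_totRun hist M.init a₀ (by rw [← ha, hr])
      have hbM : p.1 ∈ M.beta z hist := (mem_beta M).2 ⟨a₀, hrunM, p, hp, rfl⟩
      have hbN : q.1 ∈ N.beta z hist := (mem_beta N).2 ⟨r.val.2, hbrun, q, hq, rfl⟩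
      have hq1 : q.1 = p.1 := Part.mem_unique hbN (h z hist p.1 hbM)
      have hb1 : b.1 = p.1 := by
        have := congrArg Prod.fst heq
        simp only at this
        rw [← this, hq1]
      show (b.1, b.2.val.1) ∈ M.liftTran (z, r.val.1)
      rw [hr, liftTran_inl]
      refine (Part.mem_map_iff _).2 ⟨p, hp, ?_⟩
      rw [hb1, hb2]

theorem pm_lockT (hM : M.Meas) (hN : N.Meas) :
    (letI := M.ms; letI := N.ms; PartialMeasurable (lockT M N)) := by
  letI := M.ms; letI := N.ms
  have h1 : PartialMeasurable fun x : (Xp ⊕ Yn) × ((M.State ⊕ Unit) × N.State) =>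
      N.tran (x.1, x.2.2) :=
    pm_comp hN (measurable_fst.prodMk (measurable_snd.comp measurable_snd))
  have h2 : Measurable fun x : (Xp ⊕ Yn) × ((M.State ⊕ Unit) × N.State) =>
      M.total (x.1, x.2.1) :=
    (measurable_total hM).comp (measurable_fst.prodMk (measurable_fst.comp measurable_snd))
  have h3 := pm_pair h1 h2
  have h4 : Measurable fun v : ((Yp ⊕ Xn) × N.State) × (M.State ⊕ Unit) =>
      (v.1.1, (v.2, v.1.2)) :=
    (measurable_fst.comp measurable_fst).prodMk
      (measurable_snd.prodMk (measurable_snd.comp measurable_fst))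
  have h5 := pm_map h3 h4
  have he : lockT M N = fun x =>
      (((N.tran (x.1, x.2.2)).map fun y => (y, M.total (x.1, x.2.1))).map
        fun v => (v.1.1, (v.2, v.1.2))) := by
    funext x
    rw [Part.map_map]
    rfl
  rw [he]
  exact h5

theorem pm_subtype {Z S Y : Type*} [MeasurableSpace Z] [MeasurableSpace S] [MeasurableSpace Y]
    {F : (Z × S) →. (Y × S)} (hF : PartialMeasurable F) {R : Set S}
    {f' : (Z × ↥R) →. (Y × ↥R)}
    (hcl : ∀ (x : Z × ↥R) (y : Y × S), y ∈ F (x.1, x.2.val) → y.2 ∈ R)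
    (hmem : ∀ (x : Z × ↥R) (b : Y × ↥R), b ∈ f' x ↔ (b.1, b.2.val) ∈ F (x.1, x.2.val)) :
    PartialMeasurable f' := by
  have hι : Measurable fun x : Z × ↥R => (x.1, x.2.val) :=
    measurable_fst.prodMk (measurable_subtype_coe.comp measurable_snd)
  apply pm_prod_target
  · have he : {x : Z × ↥R | (f' x).Dom}
        = (fun x : Z × ↥R => (x.1, x.2.val)) ⁻¹' {x' | (F x').Dom} := by
      ext x
      simp only [Set.mem_setOf_eq, Set.mem_preimage, Part.dom_iff_mem]
      constructor
      · rintro ⟨b, hb⟩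
        exact ⟨_, (hmem x b).1 hb⟩
      · rintro ⟨y, hy⟩
        exact ⟨(y.1, ⟨y.2, hcl x y hy⟩), (hmem x _).2 (by simpa using hy)⟩
    rw [he]
    exact hι (pm_dom hF)
  · intro B C hB hC
    obtain ⟨C', hC', rfl⟩ := hC
    have he : {x : Z × ↥R | ∃ p ∈ f' x, p.1 ∈ B ∧ p.2 ∈ Subtype.val ⁻¹' C'}
        = (fun x : Z × ↥R => (x.1, x.2.val)) ⁻¹' {x' | ∃ p ∈ F x', p.1 ∈ B ∧ p.2 ∈ C'} := by
      ext x
      simp only [Set.mem_setOf_eq, Set.mem_preimage]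
      constructor
      · rintro ⟨p, hp, h1, h2⟩
        exact ⟨(p.1, p.2.val), (hmem x p).1 hp, h1, h2⟩
      · rintro ⟨y, hy, h1, h2⟩
        exact ⟨(y.1, ⟨y.2, hcl x y hy⟩), (hmem x _).2 (by simpa using hy), h1, h2⟩
    rw [he]
    refine hι ?_
    have hfull := hF (B ×ˢ C') (hB.prod hC')
    have : {x' | ∃ y ∈ F x', y ∈ B ×ˢ C'} = {x' | ∃ p ∈ F x', p.1 ∈ B ∧ p.2 ∈ C'} := by
      ext x'; simp [Set.mem_prod]
    rwa [this] at hfull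

theorem mdom_measurable (hM : M.Meas) :
    (letI := M.ms; letI := N.ms;
      MeasurableSet {x' : (Xp ⊕ Yn) × ((M.State ⊕ Unit) × N.State) | mdom M N x'}) := by
  letI := M.ms; letI := N.ms
  have he : {x' : (Xp ⊕ Yn) × ((M.State ⊕ Unit) × N.State) | mdom M N x'}
      = (fun x' : (Xp ⊕ Yn) × ((M.State ⊕ Unit) × N.State) => (x'.1, x'.2.1)) ⁻¹'
        {w | (M.liftTran w).Dom} := by
    ext x'
    simp only [Set.mem_setOf_eq, Set.mem_preimage, mdom]
    rcases hx : x'.2.1 with a | u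
    · simp only [liftTran_inl]
      constructor
      · rintro ⟨a₀, ha₀, hd⟩
        cases Sum.inl_injective (hx ▸ ha₀ : (Sum.inl a : M.State ⊕ Unit) = Sum.inl a₀)
        exact hd
      · intro hd
        exact ⟨a, rfl, hd⟩
    · simp only [liftTran_inr]
      constructor
      · rintro ⟨a₀, ha₀, hd⟩
        exact absurd ha₀ (by simp)
      · intro hd
        exact absurd hd Part.not_none_dom
  rw [he]
  exact (measurable_fst.prodMk (measurable_fst.comp measurable_snd)) (pm_dom (pm_liftTran hM))

theorem pm_conTN (hM : M.Meas) (hN : N.Meas) :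
    (letI := M.ms; letI := N.ms; PartialMeasurable (conTN M N)) := by
  letI := M.ms; letI := N.ms
  exact pm_subtype (pm_lockT M N hM hN)
    (fun x y hy => reach_step M N x.2.prop hy)
    (fun x b => mem_conTN M N)

theorem pm_conTM (hM : M.Meas) (hN : N.Meas) :
    (letI := M.ms; letI := N.ms; PartialMeasurable (conTM M N)) := by
  letI := M.ms; letI := N.ms
  have hres := pm_restrict (pm_lockT M N hM hN) (mdom_measurable M N hM)
  refine pm_subtype hres ?_ ?_
  · rintro x y ⟨⟨hd, hE⟩, rfl⟩
    exact reach_step M N x.2.prop (Part.get_mem hd)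
  · intro x b
    rw [mem_conTM]
    constructor
    · rintro ⟨hl, hm⟩
      rcases hl with ⟨hd, hget⟩
      exact ⟨⟨hd, hm⟩, hget⟩
    · rintro ⟨⟨hd, hm⟩, hget⟩
      exact ⟨⟨hd, hget⟩, hm⟩

theorem le_of_betaLe (hM : M.Meas) (hN : N.Meas) (h : BetaLe M N) : M.Le N := by
  refine ⟨↥(reach M N), (letI := M.ms; letI := N.ms; inferInstance), reachInit M N,
    conTM M N, conTN M N, pm_conTM M N hM hN, pm_conTN M N hM hN, ?_, ?_, conTM_le_conTN M N⟩
  · exact Relation.EqvGen.trans _ _ _ (Relation.EqvGen.rel _ _ (sim_ext M))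
      (Relation.EqvGen.symm _ _ (Relation.EqvGen.rel _ _ (sim_conM M N h)))
  · exact Relation.EqvGen.symm _ _ (Relation.EqvGen.rel _ _ (sim_conN M N))

theorem conTM_eq_conTN (h1 : BetaLe M N) (h2 : BetaLe N M) : conTM M N = conTN M N := by
  funext x
  apply Part.ext
  intro b
  rw [mem_conTM, mem_conTN]
  constructor
  · exact And.left
  · intro hb
    refine ⟨hb, ?_⟩
    rcases (Part.mem_map_iff _).1 hb with ⟨q, hq, -⟩
    obtain ⟨hist, ha, hbrun⟩ := reach_char M N x.2.prop
    have hbN : q.1 ∈ N.beta x.1 hist := (mem_beta N).2 ⟨x.2.val.2, hbrun, q, hq, rfl⟩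
    obtain ⟨s, hs, p, hp, -⟩ := (mem_beta M).1 (h2 x.1 hist q.1 hbN)
    refine ⟨s, ?_, Part.dom_iff_mem.2 ⟨p, hp⟩⟩
    rw [ha, totRun_of_runFrom hist M.init s hs]

end ConstrSim

section Chain

variable (c : ℕ → Mealy Xp Xn Yp Yn)

open Classical in
/-- Transition of the limit machine of a chain. -/
noncomputable def chainT :
    ((Xp ⊕ Yn) × (∀ n, ((c n).State ⊕ Unit))) →.
      ((Yp ⊕ Xn) × (∀ n, ((c n).State ⊕ Unit))) :=
  fun x =>
    ⟨∃ n, ((c n).liftTran (x.1, x.2 n)).Dom,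
     fun h =>
       ((((c (Nat.find h)).liftTran (x.1, x.2 (Nat.find h))).get (Nat.find_spec h)).1,
        fun n => (c n).total (x.1, x.2 n))⟩

/-- The product measurable structure on the limit state space. -/
noncomputable def chainMS : MeasurableSpace (∀ n, ((c n).State ⊕ Unit)) :=
  letI : ∀ n, MeasurableSpace ((c n).State ⊕ Unit) := fun n => (letI := (c n).ms; inferInstance)
  MeasurableSpace.pi

/-- The limit machine of a chain. -/
noncomputable def chainL : Mealy Xp Xn Yp Yn :=
  ⟨∀ n, ((c n).State ⊕ Unit), chainMS c, fun n => Sum.inl (c n).init, chainT c⟩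

theorem chainL_run : ∀ (u : List (Xp ⊕ Yn)) (s s' : ∀ n, ((c n).State ⊕ Unit)),
    s' ∈ (chainL c).runFrom s u → s' = fun n => (c n).totRun (s n) u := by
  intro u
  induction u with
  | nil =>
      intro s s' h
      simp only [runFrom, Part.mem_some_iff] at h
      obtain rfl := Part.mem_some_iff.1 h; rfl
  | cons z u ih =>
      intro s s' h
      simp only [runFrom, Part.mem_bind_iff] at h
      obtain ⟨p, hp, hrun⟩ := Part.mem_bind_iff.1 h
      obtain ⟨hd, rfl⟩ := hp
      have := ih _ _ hrun
      rw [this]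
      funext n
      rw [totRun_cons]
      rfl

theorem chainL_run_of_mem : ∀ (hist : List (Xp ⊕ Yn)) {n : ℕ} {a' : (c n).State},
    a' ∈ (c n).runFrom (c n).init hist →
    (fun m => (c m).totRun (Sum.inl (c m).init) hist) ∈
      (chainL c).runFrom (chainL c).init hist := by
  intro hist
  induction hist using List.reverseRecOn with
  | nil =>
      intro n a' _
      simp only [totRun_nil, runFrom]
      exact Part.mem_some_iff.2 rfl
  | append_singleton u z ih =>
      intro n a' h
      rw [runFrom_append] at h
      rcases Part.mem_bind_iff.1 h with ⟨a₁, ha₁, hstep⟩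
      simp only [runFrom, Part.mem_bind_iff] at hstep
      rcases hstep with ⟨p, hp, hpz⟩
      have hIH := ih ha₁
      rw [runFrom_append]
      refine Part.mem_bind_iff.2 ⟨_, hIH, ?_⟩
      simp only [runFrom]
      have hdn : ((c n).liftTran (z, (c n).totRun (Sum.inl (c n).init) u)).Dom := by
        rw [totRun_of_runFrom u (c n).init a₁ ha₁, liftTran_inl]
        exact Part.dom_iff_mem.2 ⟨_, Part.mem_map _ hp⟩
      have hD : ∃ m, ((c m).liftTran (z, (c m).totRun (Sum.inl (c m).init) u)).Dom := ⟨n, hdn⟩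
      refine Part.mem_bind_iff.2 ⟨(chainT c (z, fun m => (c m).totRun (Sum.inl (c m).init) u)).get hD,
        Part.get_mem hD, ?_⟩
      refine Part.mem_some_iff.2 ?_
      funext m
      show (c m).totRun (Sum.inl (c m).init) (u ++ [z]) = (c m).total (z, (c m).totRun (Sum.inl (c m).init) u)
      rw [totRun_append]

theorem out_mem_beta {m : ℕ} {z : Xp ⊕ Yn} {hist : List (Xp ⊕ Yn)}
    {am : (c m).State ⊕ Unit} (ham : am = (c m).totRun (Sum.inl (c m).init) hist)
    (hd : ((c m).liftTran (z, am)).Dom) :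
    (((c m).liftTran (z, am)).get hd).1 ∈ (c m).beta z hist := by
  rcases am with a | u
  · have hmem : ((c m).liftTran (z, Sum.inl a)).get hd ∈ (c m).liftTran (z, Sum.inl a) :=
      Part.get_mem hd
    rcases (Part.mem_map_iff _).1 hmem with ⟨p, hp, heq⟩
    have harun : a ∈ (c m).runFrom (c m).init hist :=
      runFrom_of_totRun hist (c m).init a ham.symm
    rw [← heq]
    exact (mem_beta _).2 ⟨a, harun, p, hp, rfl⟩
  · exact absurd hd Part.not_none_dom

theorem beta_chainL_sub {z : Xp ⊕ Yn} {hist : List (Xp ⊕ Yn)} {y : Yp ⊕ Xn}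
    (hy : y ∈ (chainL c).beta z hist) : ∃ n, y ∈ (c n).beta z hist := by
  classical
  obtain ⟨s', hrun, q, hq, rfl⟩ := (mem_beta _).1 hy
  have hs' : s' = fun n => (c n).totRun (Sum.inl (c n).init) hist :=
    chainL_run c hist _ s' hrun
  obtain ⟨h, rfl⟩ := hq
  exact ⟨Nat.find h, out_mem_beta c (congrFun hs' (Nat.find h)) (Nat.find_spec h)⟩

theorem beta_chainL_sup (hmono : ∀ i j, i ≤ j → BetaLe (c i) (c j))
    {n : ℕ} {z : Xp ⊕ Yn} {hist : List (Xp ⊕ Yn)} {y : Yp ⊕ Xn}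
    (hy : y ∈ (c n).beta z hist) : y ∈ (chainL c).beta z hist := by
  classical
  obtain ⟨a, harun, p, hp, rfl⟩ := (mem_beta _).1 hy
  have hLrun := chainL_run_of_mem c hist harun
  set S : ∀ m, ((c m).State ⊕ Unit) := fun m => (c m).totRun (Sum.inl (c m).init) hist with hS
  have hSn : S n = Sum.inl a := totRun_of_runFrom hist (c n).init a harun
  have hdn : ((c n).liftTran (z, S n)).Dom := by
    rw [hSn, liftTran_inl]
    exact Part.dom_iff_mem.2 ⟨_, Part.mem_map _ hp⟩
  have hD : ∃ m, ((c m).liftTran (z, S m)).Dom := ⟨n, hdn⟩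
  refine (mem_beta _).2 ⟨S, hLrun, (chainT c (z, S)).get hD, Part.get_mem hD, ?_⟩
  -- the output is the output of the least defined index
  have hout : ((chainT c (z, S)).get hD).1
      = (((c (Nat.find hD)).liftTran (z, S (Nat.find hD))).get (Nat.find_spec hD)).1 := rfl
  have h1 : (((c (Nat.find hD)).liftTran (z, S (Nat.find hD))).get (Nat.find_spec hD)).1
      ∈ (c (Nat.find hD)).beta z hist := out_mem_beta c rfl (Nat.find_spec hD)
  have h2 : p.1 ∈ (c n).beta z hist := (mem_beta _).2 ⟨a, harun, p, hp, rfl⟩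
  have hK1 := hmono (Nat.find hD) (max (Nat.find hD) n) (le_max_left _ _) z hist _ h1
  have hK2 := hmono n (max (Nat.find hD) n) (le_max_right _ _) z hist _ h2
  rw [hout]
  exact Part.mem_unique hK1 hK2

theorem meas_chainL (hc : ∀ n, (c n).Meas) : (chainL c).Meas := by
  classical
  letI : ∀ n, MeasurableSpace ((c n).State ⊕ Unit) := fun n => (letI := (c n).ms; inferInstance)
  show PartialMeasurable (chainT c)
  have hproj : ∀ n, Measurable fun x : (Xp ⊕ Yn) × (∀ m, ((c m).State ⊕ Unit)) =>
      (x.1, x.2 n) := fun n =>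
    measurable_fst.prodMk ((measurable_pi_apply n).comp measurable_snd)
  have hDn : ∀ n, MeasurableSet {x : (Xp ⊕ Yn) × (∀ m, ((c m).State ⊕ Unit)) |
      ((c n).liftTran (x.1, x.2 n)).Dom} := fun n =>
    (hproj n) (pm_dom (pm_liftTran (hc n)))
  have hOn : ∀ n, ∀ B : Set (Yp ⊕ Xn), MeasurableSet B →
      MeasurableSet {x : (Xp ⊕ Yn) × (∀ m, ((c m).State ⊕ Unit)) |
        ∃ y ∈ ((c n).liftTran (x.1, x.2 n)).map Prod.fst, y ∈ B} := by
    intro n B hB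
    exact (hproj n) (pm_map (pm_liftTran (hc n)) measurable_fst B hB)
  have hG : Measurable fun x : (Xp ⊕ Yn) × (∀ m, ((c m).State ⊕ Unit)) =>
      (fun n => (c n).total (x.1, x.2 n)) :=
    measurable_pi_lambda _ fun n => (measurable_total (hc n)).comp (hproj n)
  apply pm_prod_target
  · have he : {x : (Xp ⊕ Yn) × (∀ m, ((c m).State ⊕ Unit)) | (chainT c x).Dom}
        = ⋃ n, {x | ((c n).liftTran (x.1, x.2 n)).Dom} := by
      ext x
      simp only [Set.mem_setOf_eq, Set.mem_iUnion, chainT]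
    rw [he]
    exact MeasurableSet.iUnion hDn
  · intro B V hB hV
    have he : {x : (Xp ⊕ Yn) × (∀ m, ((c m).State ⊕ Unit)) |
          ∃ p ∈ chainT c x, p.1 ∈ B ∧ p.2 ∈ V}
        = (⋃ n, ({x | ((c n).liftTran (x.1, x.2 n)).Dom} ∩
            (⋂ m < n, {x | ((c m).liftTran (x.1, x.2 m)).Dom}ᶜ) ∩
            {x | ∃ y ∈ ((c n).liftTran (x.1, x.2 n)).map Prod.fst, y ∈ B})) ∩
          (fun x : (Xp ⊕ Yn) × (∀ m, ((c m).State ⊕ Unit)) =>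
            (fun n => (c n).total (x.1, x.2 n))) ⁻¹' V := by
      ext x
      simp only [Set.mem_setOf_eq, Set.mem_inter_iff, Set.mem_iUnion, Set.mem_preimage,
        Set.mem_iInter, Set.mem_compl_iff]
      constructor
      · rintro ⟨p, ⟨h, rfl⟩, hpB, hpV⟩
        refine ⟨⟨Nat.find h, ⟨Nat.find_spec h, fun m hm => Nat.find_min h hm⟩, ?_⟩, hpV⟩
        exact ⟨_, Part.mem_map _ (Part.get_mem (Nat.find_spec h)), hpB⟩
      · rintro ⟨⟨n, ⟨hn, hmin⟩, y, hy, hyB⟩, hV'⟩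
        have h : ∃ m, ((c m).liftTran (x.1, x.2 m)).Dom := ⟨n, hn⟩
        have hfind : Nat.find h = n := by
          refine le_antisymm (Nat.find_min' h hn) ?_
          by_contra hlt
          push_neg at hlt
          exact hmin _ hlt (Nat.find_spec h)
        refine ⟨(chainT c x).get h, ⟨h, rfl⟩, ?_, hV'⟩
        have hq : ((chainT c x).get h).1
            = (((c (Nat.find h)).liftTran (x.1, x.2 (Nat.find h))).get (Nat.find_spec h)).1 := rfl
        rcases (Part.mem_map_iff _).1 hy with ⟨q, hq', rfl⟩
        have hqe : ((c n).liftTran (x.1, x.2 n)).get (hfind ▸ Nat.find_spec h) = q :=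
          Part.get_eq_of_mem hq' _
        rw [hq]
        subst hfind
        rw [hqe]
        exact hyB
    rw [he]
    refine MeasurableSet.inter ?_ (hG hV)
    refine MeasurableSet.iUnion fun n => ?_
    exact ((hDn n).inter (MeasurableSet.iInter fun m => MeasurableSet.iInter fun _ =>
      (hDn m).compl)).inter (hOn n B hB)

end Chain

end Mealy

end MealyAux


/-- The behavioural-equivalence classes of Mealy machines from `X` to `Y` with the
order `Mealy.Le` form a pointed ω-complete partial order: the order is reflexive,
transitive and antisymmetric up to behavioural equivalence, has a least element,
and every ascending ω-chain has a least upper bound. -/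
theorem mealy_pointed_omegaCPO :
    (∀ M : Mealy Xp Xn Yp Yn, M.Meas → M.Le M) ∧
    (∀ M N L : Mealy Xp Xn Yp Yn, M.Meas → N.Meas → L.Meas →
      M.Le N → N.Le L → M.Le L) ∧
    (∀ M N : Mealy Xp Xn Yp Yn, M.Meas → N.Meas →
      M.Le N → N.Le M → M.Eqv N) ∧
    (∃ bot : Mealy Xp Xn Yp Yn, bot.Meas ∧
      ∀ M : Mealy Xp Xn Yp Yn, M.Meas → bot.Le M) ∧
    (∀ c : ℕ → Mealy Xp Xn Yp Yn, (∀ n, (c n).Meas) →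
      (∀ n, (c n).Le (c (n + 1))) →
      ∃ L : Mealy Xp Xn Yp Yn, L.Meas ∧ (∀ n, (c n).Le L) ∧
        ∀ U : Mealy Xp Xn Yp Yn, U.Meas → (∀ n, (c n).Le U) → L.Le U) := by
  constructor
  · intro M hM
    exact ⟨M.State, M.ms, M.init, M.tran, M.tran, hM, hM,
      Relation.EqvGen.refl M, Relation.EqvGen.refl M, fun a b hb => hb⟩
  constructor
  · intro M N L hM hN hL h1 h2
    exact Mealy.le_of_betaLe M L hM hL
      ((Mealy.betaLe_of_le h1).trans (Mealy.betaLe_of_le h2))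
  constructor
  · intro M N hM hN h1 h2
    have b1 := Mealy.betaLe_of_le h1
    have b2 := Mealy.betaLe_of_le h2
    have e1 : M.Eqv (⟨↥(Mealy.reach M N), (letI := M.ms; letI := N.ms; inferInstance),
        Mealy.reachInit M N, Mealy.conTM M N⟩ : Mealy Xp Xn Yp Yn) :=
      Relation.EqvGen.trans _ _ _ (Relation.EqvGen.rel _ _ (Mealy.sim_ext M))
        (Relation.EqvGen.symm _ _ (Relation.EqvGen.rel _ _ (Mealy.sim_conM M N b1)))
    have e2 : N.Eqv (⟨↥(Mealy.reach M N), (letI := M.ms; letI := N.ms; inferInstance),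
        Mealy.reachInit M N, Mealy.conTN M N⟩ : Mealy Xp Xn Yp Yn) :=
      Relation.EqvGen.symm _ _ (Relation.EqvGen.rel _ _ (Mealy.sim_conN M N))
    rw [← Mealy.conTM_eq_conTN M N b1 b2] at e2
    exact Relation.EqvGen.trans _ _ _ e1 (Relation.EqvGen.symm _ _ e2)
  constructor
  · have hbm : (⟨PUnit, inferInstance, PUnit.unit,
        fun _ => Part.none⟩ : Mealy Xp Xn Yp Yn).Meas := by
      intro A hA
      have he : {x : (Xp ⊕ Yn) × PUnit |
          ∃ y ∈ (Part.none : Part ((Yp ⊕ Xn) × PUnit)), y ∈ A} = ∅ := by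
        ext x; simp
      rw [he]
      exact MeasurableSet.empty
    refine ⟨_, hbm, ?_⟩
    intro M hM
    refine Mealy.le_of_betaLe _ M hbm hM ?_
    intro z hist y hy
    exfalso
    obtain ⟨s, hs, p, hp, -⟩ := (Mealy.mem_beta _).1 hy
    exact Part.notMem_none _ hp
  · intro c hc hchain
    have hmono : ∀ i j, i ≤ j → Mealy.BetaLe (c i) (c j) := by
      intro i j hij
      induction j, hij using Nat.le_induction with
      | base => exact Mealy.BetaLe.refl _
      | succ j hij ih => exact ih.trans (Mealy.betaLe_of_le (hchain j))
    refine ⟨Mealy.chainL c, Mealy.meas_chainL c hc, fun n => ?_, fun U hU hle => ?_⟩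
    · exact Mealy.le_of_betaLe _ _ (hc n) (Mealy.meas_chainL c hc)
        (fun z hist y hy => Mealy.beta_chainL_sup c hmono hy)
    · refine Mealy.le_of_betaLe _ _ (Mealy.meas_chainL c hc) hU ?_
      intro z hist y hy
      obtain ⟨n, hn⟩ := Mealy.beta_chainL_sub c hy
      exact Mealy.betaLe_of_le (hle n) z hist y hn
end
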